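/- arXiv:2603.22063 — 6 statements merged into one kernel-verified Lean document; each statement's English description precedes it below -/
import Mathlib

section
/- Let g ≥ 1 and let Ē be the edge relation of the g×g rook graph. If X, X' ⊆ {1,…,g} × {1,…,g} are sets with |X| ≥ 3, |X'| ≥ 3 and X × X' ⊆ Ē, then either all vertices in X ∪ X' have the same first coordinate (they lie in one row) or all vertices in X ∪ X' have the same second coordinate (they lie in one column). -/
open Finset

section Defs

variable {α : Type*}

/-- The arc relation induced by a finite set of arcs. -/
def ArcRel (A : Finset (α × α)) (x y : α) : Prop := (x, y) ∈ A

/-- The cluster of a vertex `v`: the set of original vertices (elements of `Vbar`,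
which are exactly the sinks of the cluster DAG) reachable from `v` in `(V, A)`. -/
def Cluster [DecidableEq α] (Vbar : Finset α) (A : Finset (α × α)) (v : α) : Set α :=
  {u | u ∈ Vbar ∧ Relation.ReflTransGen (ArcRel A) v u}

/-- `(V, A, E)` is a DAG compression of the directed graph `(Vbar, Ebar)`. -/
structure IsDagCompression [DecidableEq α] (Vbar : Finset α) (Ebar : Finset (α × α))
    (V : Finset α) (A E : Finset (α × α)) : Prop where
  vbar_subset : Vbar ⊆ V
  arcs_subset : A ⊆ V ×ˢ V
  acyclic : ∀ v : α, ¬ Relation.TransGen (ArcRel A) v v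
  sinks : ∀ v ∈ V, ((∀ u, (v, u) ∉ A) ↔ v ∈ Vbar)
  edges_subset : E ⊆ V ×ˢ V
  represents : (↑Ebar : Set (α × α)) =
    ⋃ e ∈ E, (Cluster Vbar A e.1) ×ˢ (Cluster Vbar A e.2)

/-- An optimal DAG compression: no DAG compression of the same graph has smaller size
`|A| + |E|`. -/
def IsOptimalDagCompression [DecidableEq α] (Vbar : Finset α) (Ebar : Finset (α × α))
    (V : Finset α) (A E : Finset (α × α)) : Prop :=
  IsDagCompression Vbar Ebar V A E ∧
    ∀ (V' : Finset α) (A' E' : Finset (α × α)),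
      IsDagCompression Vbar Ebar V' A' E' → A.card + E.card ≤ A'.card + E'.card

/-- The minimum size `|A| + |E|` of a DAG compression of `(Vbar, Ebar)`. -/
noncomputable def minCompSize [DecidableEq α] (Vbar : Finset α) (Ebar : Finset (α × α)) : ℕ :=
  sInf {n | ∃ (V : Finset α) (A E : Finset (α × α)),
    IsDagCompression Vbar Ebar V A E ∧ A.card + E.card = n}

/-- Two vertices are twins in a directed graph with edge set `F`. -/
def Twins (F : Finset (α × α)) (t₁ t₂ : α) : Prop :=
  (∀ v, (v, t₁) ∈ F ↔ (v, t₂) ∈ F) ∧ (∀ v, (t₁, v) ∈ F ↔ (t₂, v) ∈ F)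

/-- `(V, A)` is a rooted tree: there is a root `r ∈ V` from which every vertex of `V`
is reachable by a unique directed path. -/
def IsTreeOn (V : Finset α) (A : Finset (α × α)) : Prop :=
  ∃ r ∈ V, ∀ v ∈ V, ∃! l : List α,
    l.Chain' (ArcRel A) ∧ l.head? = some r ∧ l.getLast? = some v

end Defs

/-- Vertex set of the `g × g` rook graph: the grid `{1,…,g} × {1,…,g}`. -/
def rookV (g : ℕ) : Finset (ℕ × ℕ) := Finset.Icc 1 g ×ˢ Finset.Icc 1 g

/-- Edge set of the `g × g` rook graph: `(r₁,c₁) → (r₂,c₂)` iff `r₁ = r₂ ∨ c₁ = c₂`. -/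
def rookE (g : ℕ) : Finset ((ℕ × ℕ) × (ℕ × ℕ)) :=
  (rookV g ×ˢ rookV g).filter (fun e => e.1.1 = e.2.1 ∨ e.1.2 = e.2.2)

section Tig

variable {α : Type*} [DecidableEq α]

/-- Vertex type used for twinned incidence graphs: either an element of the universe
(second shore) or one of the fresh vertices `a_S`, `b_S` (first shore). -/
abbrev TigVertex (α : Type*) := α ⊕ (Finset α × Bool)

/-- The fresh vertex `a_S`. -/
def aVert (S : Finset α) : TigVertex α := Sum.inr (S, false)

/-- The fresh vertex `b_S`. -/
def bVert (S : Finset α) : TigVertex α := Sum.inr (S, true)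

/-- Vertex set of the twinned incidence graph of a collection `T` of subsets of `U`. -/
def tigV (U : Finset α) (T : Finset (Finset α)) : Finset (TigVertex α) :=
  U.image Sum.inl ∪ T.image aVert ∪ T.image bVert

/-- Edge set of the twinned incidence graph: edges `(a_S, s)` and `(b_S, s)` for
`S ∈ T` and `s ∈ S`. -/
def tigE (T : Finset (Finset α)) : Finset (TigVertex α × TigVertex α) :=
  T.biUnion fun S =>
    S.image (fun s => (aVert S, Sum.inl s)) ∪ S.image (fun s => (bVert S, Sum.inl s))

end Tig

/-- `{S ∩ {1,…,i} : S ∈ T, 1 ≤ i ≤ m} ∖ {∅}` together with all singletons `{j}`, `j ∈ {1,…,m}`. -/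
def hatCollection (m : ℕ) (T : Finset (Finset ℕ)) : Finset (Finset ℕ) :=
  (Finset.Icc 1 m).image (fun j => ({j} : Finset ℕ)) ∪
    ((T ×ˢ Finset.Icc 1 m).image (fun p => p.1 ∩ Finset.Icc 1 p.2)).erase ∅

/-- If `X, X' ⊆ {1,…,g}²` with `|X| ≥ 3`, `|X'| ≥ 3` and `X × X'` contained
in the edge relation of the rook graph, then all vertices of `X ∪ X'` lie in one row or
all lie in one column. -/
theorem rook_biclique_row_or_column (g : ℕ) (hg : 1 ≤ g) (X X' : Finset (ℕ × ℕ))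
    (hX : X ⊆ rookV g) (hX' : X' ⊆ rookV g)
    (hcX : 3 ≤ X.card) (hcX' : 3 ≤ X'.card)
    (hprod : X ×ˢ X' ⊆ rookE g) :
    (∃ r, ∀ p ∈ X ∪ X', p.1 = r) ∨ (∃ c, ∀ p ∈ X ∪ X', p.2 = c) := by
  -- cross relation
  have hcross : ∀ x ∈ X, ∀ p ∈ X', x.1 = p.1 ∨ x.2 = p.2 := by
    intro x hx p hp
    have := hprod (Finset.mk_mem_product hx hp)
    simpa [rookE, Finset.mem_filter] using (Finset.mem_filter.mp this).2
  -- within X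
  have hXrel : ∀ x ∈ X, ∀ y ∈ X, x.1 = y.1 ∨ x.2 = y.2 := by
    intro x hx y hy
    by_contra h
    push_neg at h
    obtain ⟨h1, h2⟩ := h
    have hsub : X' ⊆ {(x.1, y.2), (y.1, x.2)} := by
      intro p hp
      rcases hcross x hx p hp with hx1 | hx2 <;> rcases hcross y hy p hp with hy1 | hy2
      · exact absurd (hx1.trans hy1.symm) h1
      · simp [Prod.ext_iff, ← hx1, ← hy2]
      · simp [Prod.ext_iff, ← hy1, ← hx2]
      · exact absurd (hx2.trans hy2.symm) h2
    have := Finset.card_le_card hsub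
    have h2' : ({(x.1, y.2), (y.1, x.2)} : Finset (ℕ × ℕ)).card ≤ 2 :=
      Finset.card_insert_le _ _ |>.trans (by simp)
    omega
  -- within X'
  have hX'rel : ∀ x ∈ X', ∀ y ∈ X', x.1 = y.1 ∨ x.2 = y.2 := by
    intro x hx y hy
    by_contra h
    push_neg at h
    obtain ⟨h1, h2⟩ := h
    have hsub : X ⊆ {(x.1, y.2), (y.1, x.2)} := by
      intro p hp
      rcases hcross p hp x hx with hx1 | hx2 <;> rcases hcross p hp y hy with hy1 | hy2
      · exact absurd (hx1.symm.trans hy1) h1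
      · simp [Prod.ext_iff, hx1, hy2]
      · simp [Prod.ext_iff, hy1, hx2]
      · exact absurd (hx2.symm.trans hy2) h2
    have := Finset.card_le_card hsub
    have h2' : ({(x.1, y.2), (y.1, x.2)} : Finset (ℕ × ℕ)).card ≤ 2 :=
      Finset.card_insert_le _ _ |>.trans (by simp)
    omega
  -- all pairs of Y = X ∪ X' related
  have hrel : ∀ x ∈ X ∪ X', ∀ y ∈ X ∪ X', x.1 = y.1 ∨ x.2 = y.2 := by
    intro x hx y hy
    rcases Finset.mem_union.mp hx with hx | hx <;> rcases Finset.mem_union.mp hy with hy | hy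
    · exact hXrel x hx y hy
    · exact hcross x hx y hy
    · exact (hcross y hy x hx).imp Eq.symm Eq.symm
    · exact hX'rel x hx y hy
  obtain ⟨x0, hx0⟩ : (X ∪ X').Nonempty := by
    have : X.Nonempty := Finset.card_pos.mp (by omega)
    exact this.mono Finset.subset_union_left
  by_cases hrow : ∀ p ∈ X ∪ X', p.1 = x0.1
  · exact Or.inl ⟨x0.1, hrow⟩
  · push_neg at hrow
    obtain ⟨y, hy, hy1⟩ := hrow
    have hc : x0.2 = y.2 := (hrel x0 hx0 y hy).resolve_left (fun h => hy1 h.symm)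
    refine Or.inr ⟨x0.2, fun z hz => ?_⟩
    rcases hrel z hz x0 hx0 with h1 | h2
    · rcases hrel z hz y hy with h1' | h2'
      · exact absurd (h1.symm.trans h1').symm hy1
      · exact h2'.trans hc.symm
    · exact h2
end

section
/- For every g ≥ 1 and every tree compression (V, A, E) of the g×g rook graph, the number of compression edges satisfies |E| ≥ g³/32 − g², i.e., 32·(|E| + g²) ≥ g³. -/
open Finset

/-!
The clusters of a tree compression form a laminar family, and a compression edge `e` spans a
rectangle `C(e.1) × C(e.2)` of the rook graph, so `C(e.1)` lies in the cross (row ∪ column) of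
every point of `C(e.2)` and vice versa. Call a grid point row-good if no cluster through it is a
row segment with at least two points, column-good likewise; by laminarity every point is row- or
column-good. Call two row-good points `p ≠ q` of a row bad if some cluster through one of them
with a second point lies in the cross of the other. Laminarity allows each `p` at most one such
partner in its row, since the crosses of two points of a row meet only in that row; and a pair
that is not bad is covered only by an edge with clusters exactly `{p}` and `{q}`, so such pairs
use pairwise distinct edges. A row with `k` row-good points thus costs at least `k² - 3k` edges,
and since there are at least `g²` good points, Cauchy–Schwarz over rows and columns gives
`g³ ≤ 2|E| + 12 g²`.
-/

open Relation

def IsLaminar {β α : Type*} (K : β → Set α) : Prop :=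
  ∀ u v, (K u ∩ K v).Nonempty → K u ⊆ K v ∨ K v ⊆ K u

theorem IsLaminar.preimage {β α γ : Type*} {K : β → Set α} (hK : IsLaminar K) (f : γ → α) :
    IsLaminar fun u => f ⁻¹' K u := by
  rintro u v ⟨y, hu, hv⟩
  exact (hK u v ⟨f y, hu, hv⟩).imp (fun h => Set.preimage_mono h) fun h => Set.preimage_mono h

section Tree

variable {α : Type*} {V : Finset α} {A : Finset (α × α)}

theorem IsTreeOn.parent_unique (hA : A ⊆ V ×ˢ V) (htree : IsTreeOn V A) {a b x : α}
    (ha : (a, x) ∈ A) (hb : (b, x) ∈ A) : a = b := by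
  obtain ⟨r, -, hpath⟩ := htree
  have extend : ∀ c, (c, x) ∈ A → ∃ l : List α, l.getLast? = some c ∧
      ((l ++ [x]).IsChain (ArcRel A) ∧ (l ++ [x]).head? = some r ∧
        (l ++ [x]).getLast? = some x) := by
    intro c hc
    obtain ⟨l, ⟨hl, hhead, hlast⟩, -⟩ := hpath c (mem_product.1 (hA hc)).1
    refine ⟨l, hlast, hl.append (List.isChain_singleton x) ?_, ?_, List.getLast?_concat⟩
    · simpa [hlast, ArcRel] using hc
    · cases l <;> simp_all
  obtain ⟨la, hla, hpa⟩ := extend a ha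
  obtain ⟨lb, hlb, hpb⟩ := extend b hb
  obtain ⟨_, -, huniq⟩ := hpath x (mem_product.1 (hA ha)).2
  have hl : la = lb := List.append_cancel_right ((huniq _ hpa).trans (huniq _ hpb).symm)
  exact Option.some.inj (hla.symm.trans (hl ▸ hlb))

theorem IsTreeOn.reflTransGen_total (hA : A ⊆ V ×ˢ V) (htree : IsTreeOn V A) {u v p : α}
    (hu : ReflTransGen (ArcRel A) u p) (hv : ReflTransGen (ArcRel A) v p) :
    ReflTransGen (ArcRel A) u v ∨ ReflTransGen (ArcRel A) v u := by
  induction hu with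
  | refl => exact .inr hv
  | @tail b c hub hbc ih =>
    rcases hv.cases_tail with rfl | ⟨d, hvd, hdc⟩
    · exact .inl (hub.tail hbc)
    · exact ih (htree.parent_unique hA hdc hbc ▸ hvd)

theorem cluster_subset_of_reflTransGen [DecidableEq α] {Vbar : Finset α} {u v : α}
    (h : ReflTransGen (ArcRel A) u v) : Cluster Vbar A v ⊆ Cluster Vbar A u :=
  fun _ hy => ⟨hy.1, h.trans hy.2⟩

theorem IsTreeOn.isLaminar_cluster [DecidableEq α] (hA : A ⊆ V ×ˢ V) (htree : IsTreeOn V A)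
    (Vbar : Finset α) : IsLaminar (Cluster Vbar A) := by
  rintro u v ⟨y, hu, hv⟩
  exact (htree.reflTransGen_total hA hu.2 hv.2).symm.imp
    cluster_subset_of_reflTransGen cluster_subset_of_reflTransGen

end Tree

section Laminar

variable {β α : Type*} {K : β → Set α}

def HasNontrivialClusterIn (K : β → Set α) (S : Set α) (p : α) : Prop :=
  ∃ u, p ∈ K u ∧ K u ⊆ S ∧ (K u).Nontrivial

theorem HasNontrivialClusterIn.mono {S T : Set α} {p : α} (h : HasNontrivialClusterIn K S p)
    (hST : S ⊆ T) : HasNontrivialClusterIn K T p :=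
  let ⟨u, hp, hS, hu⟩ := h
  ⟨u, hp, hS.trans hST, hu⟩

theorem eq_singleton_of_not_hasNontrivialClusterIn {S : Set α} {p : α} {u : β}
    (h : ¬ HasNontrivialClusterIn K S p) (hp : p ∈ K u) (hS : K u ⊆ S) : K u = {p} :=
  (Set.not_nontrivial_iff.1 fun hu => h ⟨u, hp, hS, hu⟩).eq_singleton_of_mem hp

theorem IsLaminar.hasNontrivialClusterIn_inter (hK : IsLaminar K) {S T : Set α} {p : α}
    (hS : HasNontrivialClusterIn K S p) (hT : HasNontrivialClusterIn K T p) :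
    HasNontrivialClusterIn K (S ∩ T) p := by
  obtain ⟨u, hpu, huS, hu⟩ := hS
  obtain ⟨v, hpv, hvT, hv⟩ := hT
  rcases hK u v ⟨p, hpu, hpv⟩ with huv | hvu
  · exact ⟨u, hpu, Set.subset_inter huS (huv.trans hvT), hu⟩
  · exact ⟨v, hpv, Set.subset_inter (hvu.trans huS) hvT, hv⟩

end Laminar

section Grid

variable {ι κ β : Type*} {K : β → Set (ι × κ)}

def cross (q : ι × κ) : Set (ι × κ) := {x | x.1 = q.1 ∨ x.2 = q.2}

def RowGood (K : β → Set (ι × κ)) (p : ι × κ) : Prop :=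
  ¬ HasNontrivialClusterIn K {x | x.1 = p.1} p

def ColGood (K : β → Set (ι × κ)) (p : ι × κ) : Prop :=
  ¬ HasNontrivialClusterIn K {x | x.2 = p.2} p

theorem IsLaminar.rowGood_or_colGood (hK : IsLaminar K) (p : ι × κ) :
    RowGood K p ∨ ColGood K p := by
  by_contra h
  obtain ⟨hrow, hcol⟩ := not_or.1 h
  obtain ⟨u, -, hu, hnt⟩ := hK.hasNontrivialClusterIn_inter (not_not.1 hrow) (not_not.1 hcol)
  exact hnt.not_subset_singleton (hu.trans fun x hx => Prod.ext hx.1 hx.2)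

theorem IsLaminar.eq_of_rowGood (hK : IsLaminar K) {p q q' : ι × κ} (hp : RowGood K p)
    (hq : q.1 = p.1) (hq' : q'.1 = p.1) (h : HasNontrivialClusterIn K (cross q) p)
    (h' : HasNontrivialClusterIn K (cross q') p) : q = q' := by
  by_contra hne
  refine hp ((hK.hasNontrivialClusterIn_inter h h').mono ?_)
  rintro x ⟨hx | hx, hx' | hx'⟩
  · exact hx.trans hq
  · exact hx.trans hq
  · exact hx'.trans hq'
  · exact absurd (Prod.ext (hq.trans hq'.symm) (hx.symm.trans hx')) hne

theorem IsLaminar.eq_of_colGood (hK : IsLaminar K) {p q q' : ι × κ} (hp : ColGood K p)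
    (hq : q.2 = p.2) (hq' : q'.2 = p.2) (h : HasNontrivialClusterIn K (cross q) p)
    (h' : HasNontrivialClusterIn K (cross q') p) : q = q' := by
  by_contra hne
  refine hp ((hK.hasNontrivialClusterIn_inter h h').mono ?_)
  rintro x ⟨hx | hx, hx' | hx'⟩
  · exact absurd (Prod.ext (hx.symm.trans hx') (hq.trans hq'.symm)) hne
  · exact hx'.trans hq'
  · exact hx.trans hq
  · exact hx.trans hq

theorem card_le_card_of_rectangle_cover {E : Finset (β × β)} {P : Finset ((ι × κ) × (ι × κ))}
    (hrect : ∀ e ∈ E, ∀ p ∈ K e.1, ∀ q ∈ K e.2, p.1 = q.1 ∨ p.2 = q.2)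
    (hcover : ∀ z ∈ P, ∃ e ∈ E, z.1 ∈ K e.1 ∧ z.2 ∈ K e.2)
    (hP : ∀ z ∈ P, ¬ HasNontrivialClusterIn K (cross z.2) z.1 ∧
      ¬ HasNontrivialClusterIn K (cross z.1) z.2) :
    #P ≤ #E := by
  refine card_le_card_of_forall_subsingleton _ hcover ?_
  rintro e he z ⟨hz, hz₁, hz₂⟩ z' ⟨-, hz₁', hz₂'⟩
  have h₁ : K e.1 = {z.1} := eq_singleton_of_not_hasNontrivialClusterIn (hP z hz).1 hz₁
    fun x hx => hrect e he x hx z.2 hz₂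
  have h₂ : K e.2 = {z.2} := eq_singleton_of_not_hasNontrivialClusterIn (hP z hz).2 hz₂
    fun y hy => (hrect e he z.1 hz₁ y hy).imp Eq.symm Eq.symm
  rw [h₁] at hz₁'
  rw [h₂] at hz₂'
  exact Prod.ext hz₁'.symm hz₂'.symm

end Grid

section Fibers

variable {α γ : Type*} [DecidableEq γ] {s : Finset α} {t : Finset γ} {ℓ : α → γ}

theorem sum_sq_card_fiber (h : (s : Set α).MapsTo ℓ t) :
    ∑ r ∈ t, #{x ∈ s | ℓ x = r} ^ 2 = #{z ∈ s ×ˢ s | ℓ z.1 = ℓ z.2} := by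
  rw [card_eq_sum_card_fiberwise (f := fun z => ℓ z.1) (t := t)
    fun z hz => h (mem_product.1 (mem_filter.1 hz).1).1]
  refine sum_congr rfl fun r _ => ?_
  rw [sq, ← card_product]
  congr 1
  ext z
  simp only [mem_product, mem_filter]
  constructor
  · rintro ⟨⟨h₁, rfl⟩, h₂, h₂'⟩
    exact ⟨⟨⟨h₁, h₂⟩, h₂'.symm⟩, rfl⟩
  · rintro ⟨⟨⟨h₁, h₂⟩, h₁₂⟩, rfl⟩
    exact ⟨⟨h₁, rfl⟩, h₂, h₁₂.symm⟩

theorem sq_card_le_card_mul_card_sameFiber (h : (s : Set α).MapsTo ℓ t) :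
    #s ^ 2 ≤ #t * #{z ∈ s ×ˢ s | ℓ z.1 = ℓ z.2} :=
  calc #s ^ 2 = (∑ r ∈ t, #{x ∈ s | ℓ x = r}) ^ 2 := by rw [← card_eq_sum_card_fiberwise h]
    _ ≤ #t * ∑ r ∈ t, #{x ∈ s | ℓ x = r} ^ 2 := sq_sum_le_card_mul_sum_sq
    _ = #t * #{z ∈ s ×ˢ s | ℓ z.1 = ℓ z.2} := by rw [sum_sq_card_fiber h]

theorem card_sameFiber_le [DecidableEq α] (R : α → α → Prop) [DecidableRel R]
    (hR : ∀ p ∈ s, ∀ q ∈ s, ∀ q' ∈ s, ℓ q = ℓ p → ℓ q' = ℓ p → R p q → R p q' → q = q') :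
    #{z ∈ s ×ˢ s | ℓ z.1 = ℓ z.2} ≤
      #{z ∈ s ×ˢ s | ℓ z.1 = ℓ z.2 ∧ z.1 ≠ z.2 ∧ ¬ R z.1 z.2 ∧ ¬ R z.2 z.1} + 3 * #s := by
  set same := {z ∈ s ×ˢ s | ℓ z.1 = ℓ z.2}
  have hout : #{z ∈ same | R z.1 z.2} ≤ #s := by
    refine card_le_card_of_injOn Prod.fst (fun z hz => ?_) fun z hz z' hz' h => ?_
    · simp only [same, mem_coe, mem_filter, mem_product] at hz
      exact hz.1.1.1
    · simp only [same, mem_coe, mem_filter, mem_product] at hz hz'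
      obtain ⟨⟨⟨hp, hq⟩, hpq⟩, hpq₁⟩ := hz
      obtain ⟨⟨⟨-, hq'⟩, hpq'⟩, hpq₂⟩ := hz'
      rw [← h] at hpq' hpq₂
      exact Prod.ext h (hR _ hp _ hq _ hq' hpq.symm hpq'.symm hpq₁ hpq₂)
  have hin : #{z ∈ same | R z.2 z.1} ≤ #s := by
    refine card_le_card_of_injOn Prod.snd (fun z hz => ?_) fun z hz z' hz' h => ?_
    · simp only [same, mem_coe, mem_filter, mem_product] at hz
      exact hz.1.1.2
    · simp only [same, mem_coe, mem_filter, mem_product] at hz hz'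
      obtain ⟨⟨⟨hp, hq⟩, hpq⟩, hpq₁⟩ := hz
      obtain ⟨⟨⟨hp', -⟩, hpq'⟩, hpq₂⟩ := hz'
      rw [← h] at hpq' hpq₂
      exact Prod.ext (hR _ hq _ hp _ hp' hpq hpq' hpq₁ hpq₂) h
  calc #same ≤ #(s.diag ∪ {z ∈ s ×ˢ s | ℓ z.1 = ℓ z.2 ∧ z.1 ≠ z.2 ∧ ¬ R z.1 z.2 ∧ ¬ R z.2 z.1} ∪
        {z ∈ same | R z.1 z.2} ∪ {z ∈ same | R z.2 z.1}) := by
        refine card_le_card fun z hz => ?_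
        simp only [same, mem_union, mem_filter, mem_diag, mem_product] at hz ⊢
        tauto
    _ ≤ #s.diag + #{z ∈ s ×ˢ s | ℓ z.1 = ℓ z.2 ∧ z.1 ≠ z.2 ∧ ¬ R z.1 z.2 ∧ ¬ R z.2 z.1} +
        #{z ∈ same | R z.1 z.2} + #{z ∈ same | R z.2 z.1} := by
      grw [card_union_le, card_union_le, card_union_le]
    _ ≤ _ := by rw [diag_card]; omega

end Fibers

theorem cube_le_of_sq_le {n a b x y : ℕ} (hab : n * n ≤ a + b) (ha : a ≤ n * n) (hb : b ≤ n * n)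
    (hx : a ^ 2 ≤ n * (x + 3 * a)) (hy : b ^ 2 ≤ n * (y + 3 * b)) :
    n ^ 3 ≤ 2 * (x + y) + 12 * n ^ 2 := by
  rcases Nat.eq_zero_or_pos n with rfl | hn
  · simp
  refine Nat.le_of_mul_le_mul_left ?_ hn
  calc n * n ^ 3 = (n * n) ^ 2 := by ring
    _ ≤ (a + b) ^ 2 := by gcongr
    _ ≤ 2 * (a ^ 2 + b ^ 2) := add_sq_le
    _ ≤ 2 * (n * (x + 3 * a) + n * (y + 3 * b)) := by gcongr
    _ = 2 * n * (x + y + 3 * (a + b)) := by ring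
    _ ≤ 2 * n * (x + y + 3 * (n * n + n * n)) := by gcongr
    _ = n * (2 * (x + y) + 12 * n ^ 2) := by ring

theorem IsLaminar.cube_le_of_rook_cover {ι κ β : Type*} {K : β → Set (ι × κ)}
    (hK : IsLaminar K) {R : Finset ι} {C : Finset κ} (hRC : #C = #R)
    {E : Finset (β × β)}
    (hcover : ∀ p ∈ R ×ˢ C, ∀ q ∈ R ×ˢ C, p.1 = q.1 ∨ p.2 = q.2 →
      ∃ e ∈ E, p ∈ K e.1 ∧ q ∈ K e.2)
    (hrect : ∀ e ∈ E, ∀ p ∈ K e.1, ∀ q ∈ K e.2, p.1 = q.1 ∨ p.2 = q.2) :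
    #R ^ 3 ≤ 2 * #E + 12 * #R ^ 2 := by
  classical
  set n := #R
  set rows := {p ∈ R ×ˢ C | RowGood K p}
  set cols := {p ∈ R ×ˢ C | ColGood K p}
  let Bad : ι × κ → ι × κ → Prop := fun p q => HasNontrivialClusterIn K (cross q) p
  set Prow := {z ∈ rows ×ˢ rows | z.1.1 = z.2.1 ∧ z.1 ≠ z.2 ∧ ¬ Bad z.1 z.2 ∧ ¬ Bad z.2 z.1}
  set Pcol := {z ∈ cols ×ˢ cols | z.1.2 = z.2.2 ∧ z.1 ≠ z.2 ∧ ¬ Bad z.1 z.2 ∧ ¬ Bad z.2 z.1}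
  have hgrid : n * n ≤ #rows + #cols :=
    calc n * n = #(R ×ˢ C) := by rw [card_product, hRC]
      _ ≤ #(rows ∪ cols) := card_le_card fun p hp => by
        rcases hK.rowGood_or_colGood p with h | h <;> simp [rows, cols, hp, h]
      _ ≤ #rows + #cols := card_union_le _ _
  have hrows : #rows ≤ n * n := by
    grw [card_filter_le, card_product, hRC]
  have hcols : #cols ≤ n * n := by
    grw [card_filter_le, card_product, hRC]
  have hP : #Prow + #Pcol ≤ #E := by
    have hmem : ∀ z ∈ Prow ∪ Pcol, (z.1 ∈ R ×ˢ C ∧ z.2 ∈ R ×ˢ C ∧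
        (z.1.1 = z.2.1 ∨ z.1.2 = z.2.2)) ∧ ¬ Bad z.1 z.2 ∧ ¬ Bad z.2 z.1 := by
      intro z hz
      simp only [Prow, Pcol, rows, cols, mem_union, mem_filter, mem_product] at hz ⊢
      tauto
    have hdisj : Disjoint Prow Pcol := disjoint_left.2 fun z hr hc =>
      (mem_filter.1 hr).2.2.1 (Prod.ext (mem_filter.1 hr).2.1 (mem_filter.1 hc).2.1)
    calc #Prow + #Pcol = #(Prow ∪ Pcol) := (card_union_of_disjoint hdisj).symm
      _ ≤ #E := card_le_card_of_rectangle_cover hrect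
        (fun z hz => hcover _ (hmem z hz).1.1 _ (hmem z hz).1.2.1 (hmem z hz).1.2.2)
        fun z hz => (hmem z hz).2
  have hrow : #rows ^ 2 ≤ n * (#Prow + 3 * #rows) :=
    (sq_card_le_card_mul_card_sameFiber fun p hp => (mem_product.1 (mem_filter.1 hp).1).1).trans
      (Nat.mul_le_mul_left _ (card_sameFiber_le Bad fun p hp q _ q' _ hq hq' =>
        hK.eq_of_rowGood (mem_filter.1 hp).2 hq hq'))
  have hcol : #cols ^ 2 ≤ n * (#Pcol + 3 * #cols) := hRC ▸
    (sq_card_le_card_mul_card_sameFiber fun p hp => (mem_product.1 (mem_filter.1 hp).1).2).trans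
      (Nat.mul_le_mul_left _ (card_sameFiber_le Bad fun p hp q _ q' _ hq hq' =>
        hK.eq_of_colGood (mem_filter.1 hp).2 hq hq'))
  exact (cube_le_of_sq_le hgrid hrows hcols hrow hcol).trans (by gcongr)

theorem IsDagCompression.mem_edges_iff {α : Type*} [DecidableEq α] {Vbar V : Finset α}
    {Ebar A E : Finset (α × α)} (hD : IsDagCompression Vbar Ebar V A E) {x y : α} :
    (x, y) ∈ Ebar ↔ ∃ e ∈ E, x ∈ Cluster Vbar A e.1 ∧ y ∈ Cluster Vbar A e.2 := by
  rw [← mem_coe, hD.represents]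
  simp [and_left_comm]

theorem tree_compression_rook_lower_bound_general {β : Type*} [DecidableEq β]
    (g : ℕ) (f : ℕ × ℕ → β) (hf : Function.Injective f)
    (V : Finset β) (A E : Finset (β × β))
    (hD : IsDagCompression ((rookV g).image f) ((rookE g).image (Prod.map f f)) V A E)
    (htree : IsTreeOn V A) :
    g ^ 3 ≤ 32 * (E.card + g ^ 2) := by
  have hedge : ∀ p q, (p, q) ∈ rookE g ↔ ∃ e ∈ E,
      f p ∈ Cluster ((rookV g).image f) A e.1 ∧ f q ∈ Cluster ((rookV g).image f) A e.2 :=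
    fun p q => (hf.prodMap hf).mem_finset_image.symm.trans hD.mem_edges_iff
  have hK := (htree.isLaminar_cluster hD.arcs_subset ((rookV g).image f)).preimage f
  have key := hK.cube_le_of_rook_cover (R := Icc 1 g) (C := Icc 1 g) (E := E) rfl
    (fun p hp q hq hpq => (hedge p q).1 (mem_filter.2 ⟨mem_product.2 ⟨hp, hq⟩, hpq⟩))
    fun e he p hp q hq => (mem_filter.1 ((hedge p q).2 ⟨e, he, hp, hq⟩)).2
  rw [Nat.card_Icc, Nat.add_sub_cancel] at key
  omega

/-- every tree compression of the `g × g` rook graph has at least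
`g³/32 − g²` compression edges, i.e. `32·(|E| + g²) ≥ g³`. -/
theorem tree_compression_rook_lower_bound {β : Type*} [DecidableEq β]
    (g : ℕ) (hg : 1 ≤ g) (f : ℕ × ℕ → β) (hf : Function.Injective f)
    (V : Finset β) (A E : Finset (β × β))
    (hD : IsDagCompression ((rookV g).image f) ((rookE g).image (Prod.map f f)) V A E)
    (htree : IsTreeOn V A) :
    g ^ 3 ≤ 32 * (E.card + g ^ 2) :=
  tree_compression_rook_lower_bound_general g f hf V A E hD htree
end

section
/- For every g ≥ 1, the g×g rook graph has a DAG compression (V, A, E) of size |A| + |E| ≤ 2g² + 2g. -/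
open Finset

section RookHelper

/-- Arc set of the row/column compression of the rook graph. -/
def rookA (g : ℕ) : Finset ((((ℕ × ℕ) ⊕ ℕ)) × (((ℕ × ℕ) ⊕ ℕ))) :=
  (rookV g).biUnion (fun p =>
    {(Sum.inr p.1, Sum.inl p), (Sum.inr (g + p.2), Sum.inl p)})

lemma mem_rookV {g : ℕ} {p : ℕ × ℕ} :
    p ∈ rookV g ↔ (1 ≤ p.1 ∧ p.1 ≤ g) ∧ (1 ≤ p.2 ∧ p.2 ≤ g) := by
  simp [rookV, Finset.mem_product]

lemma mem_rookA {g : ℕ} {x y : ((ℕ × ℕ) ⊕ ℕ)} :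
    (x, y) ∈ rookA g ↔
      ∃ p ∈ rookV g, (x = Sum.inr p.1 ∨ x = Sum.inr (g + p.2)) ∧ y = Sum.inl p := by
  simp only [rookA, Finset.mem_biUnion, Finset.mem_insert, Finset.mem_singleton,
    Prod.mk.injEq]
  constructor
  · rintro ⟨p, hp, (⟨hx, hy⟩ | ⟨hx, hy⟩)⟩
    · exact ⟨p, hp, Or.inl hx, hy⟩
    · exact ⟨p, hp, Or.inr hx, hy⟩
  · rintro ⟨p, hp, (hx | hx), hy⟩
    · exact ⟨p, hp, Or.inl ⟨hx, hy⟩⟩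
    · exact ⟨p, hp, Or.inr ⟨hx, hy⟩⟩

lemma rookA_shape {g : ℕ} {x y : ((ℕ × ℕ) ⊕ ℕ)} (h : ArcRel (rookA g) x y) :
    (∃ i, x = Sum.inr i) ∧ (∃ p, y = Sum.inl p) := by
  have h' : (x, y) ∈ rookA g := h
  rw [mem_rookA] at h'
  obtain ⟨p, _, hx, hy⟩ := h'
  rcases hx with hx | hx <;> exact ⟨⟨_, hx⟩, ⟨_, hy⟩⟩

lemma rtg_inl {g : ℕ} {p : ℕ × ℕ} {u : ((ℕ × ℕ) ⊕ ℕ)}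
    (h : Relation.ReflTransGen (ArcRel (rookA g)) (Sum.inl p) u) : u = Sum.inl p := by
  rcases Relation.ReflTransGen.cases_head h with h | ⟨c, hc, _⟩
  · exact h.symm
  · obtain ⟨⟨i, hi⟩, -⟩ := rookA_shape hc
    simp at hi

lemma cluster_inr {g : ℕ} (i : ℕ) :
    Cluster ((rookV g).image Sum.inl) (rookA g) (Sum.inr i) =
      {u | ∃ p ∈ rookV g, u = Sum.inl p ∧ (p.1 = i ∨ g + p.2 = i)} := by
  ext u
  simp only [Cluster, Set.mem_setOf_eq, Finset.mem_image]
  constructor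
  · rintro ⟨⟨q, hq, rfl⟩, hr⟩
    rcases Relation.ReflTransGen.cases_head hr with h | ⟨c, hc, hr'⟩
    · simp at h
    · have hc' : (Sum.inr i, c) ∈ rookA g := hc
      rw [mem_rookA] at hc'
      obtain ⟨p, hp, hx, rfl⟩ := hc'
      have := rtg_inl hr'
      have hpq : p = q := by
        have := this.symm; simpa using this
      subst hpq
      refine ⟨p, hp, rfl, ?_⟩
      rcases hx with hx | hx
      · exact Or.inl (by simpa using hx.symm)
      · exact Or.inr (by simpa using hx.symm)
  · rintro ⟨p, hp, rfl, hi⟩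
    refine ⟨⟨p, hp, rfl⟩, ?_⟩
    refine Relation.ReflTransGen.single ?_
    show (Sum.inr i, Sum.inl p) ∈ rookA g
    rw [mem_rookA]
    refine ⟨p, hp, ?_, rfl⟩
    rcases hi with hi | hi
    · exact Or.inl (by rw [hi])
    · exact Or.inr (by rw [hi])

end RookHelper

/-- the `g × g` rook graph has a DAG compression of size
`|A| + |E| ≤ 2g² + 2g`. -/
theorem rook_has_small_dag_compression (g : ℕ) (hg : 1 ≤ g) :
    ∃ (V : Finset ((ℕ × ℕ) ⊕ ℕ)) (A E : Finset (((ℕ × ℕ) ⊕ ℕ) × ((ℕ × ℕ) ⊕ ℕ))),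
      IsDagCompression ((rookV g).image Sum.inl)
        ((rookE g).image (Prod.map Sum.inl Sum.inl)) V A E ∧
      A.card + E.card ≤ 2 * g ^ 2 + 2 * g := by
  classical
  refine ⟨(rookV g).image Sum.inl ∪ (Finset.Icc 1 (2*g)).image Sum.inr,
    rookA g, (Finset.Icc 1 (2*g)).image (fun i => (Sum.inr i, Sum.inr i)), ?_, ?_⟩
  · constructor
    · exact Finset.subset_union_left
    · -- arcs_subset
      rintro ⟨x, y⟩ hxy
      rw [mem_rookA] at hxy
      obtain ⟨p, hp, hx, rfl⟩ := hxy
      rw [mem_rookV] at hp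
      rw [Finset.mem_product]
      constructor
      · rcases hx with rfl | rfl
        · refine Finset.mem_union_right _ (Finset.mem_image.2 ⟨p.1, ?_, rfl⟩)
          rw [Finset.mem_Icc]; omega
        · refine Finset.mem_union_right _ (Finset.mem_image.2 ⟨g + p.2, ?_, rfl⟩)
          rw [Finset.mem_Icc]; omega
      · exact Finset.mem_union_left _ (Finset.mem_image.2 ⟨p, mem_rookV.2 hp, rfl⟩)
    · -- acyclic
      intro v hv
      obtain ⟨b, _, hbv⟩ := Relation.TransGen.tail'_iff.mp hv
      obtain ⟨c, hvc, _⟩ := Relation.TransGen.head'_iff.mp hv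
      obtain ⟨-, p, hvp⟩ := rookA_shape hbv
      obtain ⟨⟨i, hvi⟩, -⟩ := rookA_shape hvc
      rw [hvp] at hvi
      exact absurd hvi (by simp)
    · -- sinks
      intro v hv
      rcases Finset.mem_union.mp hv with hv | hv
      · obtain ⟨p, hp, rfl⟩ := Finset.mem_image.mp hv
        constructor
        · intro _; exact Finset.mem_image.2 ⟨p, hp, rfl⟩
        · intro _ u hu
          obtain ⟨⟨i, hi⟩, -⟩ := rookA_shape hu
          simp at hi
      · obtain ⟨i, hi, rfl⟩ := Finset.mem_image.mp hv
        rw [Finset.mem_Icc] at hi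
        constructor
        · intro h
          by_cases hig : i ≤ g
          · exact absurd (mem_rookA.mpr ⟨(i, 1), mem_rookV.2 ⟨⟨hi.1, hig⟩, le_refl 1, hg⟩,
              Or.inl rfl, rfl⟩) (h _)
          · have : g + (i - g) = i := by omega
            refine absurd (mem_rookA.mpr ⟨(1, i - g),
              mem_rookV.2 ⟨⟨le_refl 1, hg⟩, by omega, by omega⟩, Or.inr ?_, rfl⟩) (h _)
            rw [this]
        · intro h
          obtain ⟨q, _, hq⟩ := Finset.mem_image.mp h
          simp at hq
    · -- edges_subset
      rintro ⟨x, y⟩ hxy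
      obtain ⟨i, hi, he⟩ := Finset.mem_image.mp hxy
      obtain ⟨rfl, rfl⟩ := Prod.mk.injEq .. ▸ he
      have : Sum.inr i ∈ (rookV g).image (Sum.inl : ℕ × ℕ → _) ∪
          (Finset.Icc 1 (2*g)).image Sum.inr :=
        Finset.mem_union_right _ (Finset.mem_image.2 ⟨i, hi, rfl⟩)
      exact Finset.mem_product.2 ⟨this, this⟩
    · -- represents
      ext ⟨x, y⟩
      simp only [Set.mem_iUnion, Set.mem_prod]
      constructor
      · intro hxy
        rw [Finset.mem_coe, Finset.mem_image] at hxy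
        obtain ⟨⟨p, q⟩, he, heq⟩ := hxy
        rw [rookE, Finset.mem_filter, Finset.mem_product] at he
        obtain ⟨⟨hp, hq⟩, hpq⟩ := he
        dsimp only at hp hq hpq
        simp only [Prod.map, Prod.mk.injEq] at heq
        obtain ⟨rfl, rfl⟩ := heq
        rcases hpq with hpq | hpq
        · refine ⟨(Sum.inr p.1, Sum.inr p.1), Finset.mem_image.2 ⟨p.1, ?_, rfl⟩, ?_, ?_⟩
          · rw [Finset.mem_Icc]
            have := mem_rookV.mp hp; omega
          · rw [cluster_inr]; exact ⟨p, hp, rfl, Or.inl rfl⟩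
          · rw [cluster_inr]; exact ⟨q, hq, rfl, Or.inl hpq.symm⟩
        · refine ⟨(Sum.inr (g + p.2), Sum.inr (g + p.2)),
            Finset.mem_image.2 ⟨g + p.2, ?_, rfl⟩, ?_, ?_⟩
          · rw [Finset.mem_Icc]
            have := mem_rookV.mp hp; omega
          · rw [cluster_inr]; exact ⟨p, hp, rfl, Or.inr rfl⟩
          · rw [cluster_inr]; exact ⟨q, hq, rfl, Or.inr (by rw [hpq])⟩
      · rintro ⟨e, he, hx, hy⟩
        obtain ⟨i, hi, rfl⟩ := Finset.mem_image.mp he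
        rw [cluster_inr] at hx hy
        obtain ⟨p, hp, rfl, hpi⟩ := hx
        obtain ⟨q, hq, rfl, hqi⟩ := hy
        rw [Finset.mem_coe, Finset.mem_image]
        refine ⟨(p, q), ?_, rfl⟩
        rw [rookE, Finset.mem_filter, Finset.mem_product]
        refine ⟨⟨hp, hq⟩, ?_⟩
        dsimp only
        have hp' := mem_rookV.mp hp
        have hq' := mem_rookV.mp hq
        rcases hpi with h1 | h1 <;> rcases hqi with h2 | h2
        · exact Or.inl (h1.trans h2.symm)
        · exact absurd (h1.trans h2.symm) (by omega)
        · exact absurd (h1.trans h2.symm) (by omega)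
        · exact Or.inr (by omega)
  · -- size bound
    have hA : (rookA g).card ≤ 2 * g ^ 2 := by
      calc (rookA g).card
          ≤ ∑ p ∈ rookV g,
            ({(Sum.inr p.1, Sum.inl p), (Sum.inr (g + p.2), Sum.inl p)} :
              Finset (((ℕ × ℕ) ⊕ ℕ) × ((ℕ × ℕ) ⊕ ℕ))).card := Finset.card_biUnion_le
        _ ≤ ∑ _p ∈ rookV g, 2 :=
            Finset.sum_le_sum (fun p _ => (Finset.card_insert_le _ _).trans (by simp))
        _ = (rookV g).card * 2 := by rw [Finset.sum_const, smul_eq_mul]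
        _ ≤ 2 * g ^ 2 := le_of_eq (by
            rw [rookV, Finset.card_product, Nat.card_Icc, Nat.add_sub_cancel]; ring)
    have hE : ((Finset.Icc 1 (2*g)).image
        (fun i => ((Sum.inr i, Sum.inr i) : ((ℕ × ℕ) ⊕ ℕ) × ((ℕ × ℕ) ⊕ ℕ)))).card ≤ 2 * g := by
      calc _ ≤ (Finset.Icc 1 (2*g)).card := Finset.card_image_le
        _ = 2 * g := by rw [Nat.card_Icc]; omega
    omega
end

section
/- Every directed graph Ḡ = (V̄, Ē) has an optimal DAG compression (V, A, E) such that every pair of vertices t₁, t₂ ∈ V̄ that are twins in Ḡ are also twins in the directed graph (V, A) and twins in the directed graph (V, E). -/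
open Finset

/-!
Start from an optimal compression. First remove, without increasing the size, every loop
`(s, s)` at an original vertex `s` having a twin `t ≠ s`. Some edge covers `(s, t)` and some edge
covers `(t, s)`; unless these are the edges `(s, t)` and `(t, s)` themselves, the loop can be
traded for a new arc into `s` or for an edge with `s` at one end. In the remaining case the three
edges inside `{s, t}` give way to a fresh vertex with arcs to `s` and `t` and a loop.

Then make one twin class `C` uniform at a time. For `r ∈ C`, pull the compression back along the
map sending `C` to `r`: every member of `C` receives copies of the arcs and edges of `r`, the
other vertices keep theirs. As `C` carries no loops, each arc or edge has at most `C.card`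
preimages in all these pullbacks together, so one of them is no larger than the original.
-/

namespace Relation

variable {β : Type*} {r r' : β → β → Prop}

section FreshSource

variable {c : β} (hr' : ∀ a b, r' a b → r a b ∨ a = c) (hc : ∀ a, ¬ r' a c)
include hr' hc

theorem ReflTransGen.of_fresh_source {x y : β} (h : ReflTransGen r' x y) (hx : x ≠ c) :
    ReflTransGen r x y := by
  induction h using ReflTransGen.head_induction_on with
  | refl => exact .refl
  | @head a z haz _ ih =>
    exact .head ((hr' a z haz).resolve_right hx) (ih fun hz => hc a (hz ▸ haz))

theorem transGen_irrefl_of_fresh_source (hacyc : ∀ v, ¬ TransGen r v v) (v : β) :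
    ¬ TransGen r' v v := by
  intro hv
  by_cases hvc : v = c
  · obtain ⟨b, -, hbc⟩ := TransGen.tail'_iff.1 hv
    exact hc b (hvc ▸ hbc)
  · obtain ⟨z, hvz, hzv⟩ := TransGen.head'_iff.1 hv
    exact hacyc v (.head' ((hr' v z hvz).resolve_right hvc)
      (hzv.of_fresh_source hr' hc fun hz => hc v (hz ▸ hvz)))

end FreshSource

section DeadEnd

variable {d : β} (hr' : ∀ a b, r' a b → r a b ∨ b = d) (hd : ∀ b, ¬ r' d b)
include hr' hd

theorem ReflTransGen.of_dead_end {x y : β} (h : ReflTransGen r' x y) (hy : y ≠ d) :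
    ReflTransGen r x y :=
  reflTransGen_swap.1 <| (reflTransGen_swap.2 h).of_fresh_source (r := Function.swap r)
    (fun a b hab => hr' b a hab) hd hy

theorem transGen_irrefl_of_dead_end (hacyc : ∀ v, ¬ TransGen r v v) (v : β) :
    ¬ TransGen r' v v := fun hv =>
  transGen_irrefl_of_fresh_source (r := Function.swap r) (r' := Function.swap r')
    (fun a b hab => hr' b a hab) hd (fun v hv => hacyc v (transGen_swap.1 hv)) v
    (transGen_swap.2 hv)

end DeadEnd

end Relation

open Relation

section Twins

variable {α : Type*} {F : Finset (α × α)}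

theorem Twins.refl (F : Finset (α × α)) (t : α) : Twins F t t :=
  ⟨fun _ => Iff.rfl, fun _ => Iff.rfl⟩

theorem Twins.symm {t s : α} (h : Twins F t s) : Twins F s t :=
  ⟨fun v => (h.1 v).symm, fun v => (h.2 v).symm⟩

theorem Twins.trans {t s u : α} (h : Twins F t s) (h' : Twins F s u) :
    Twins F t u :=
  ⟨fun v => (h.1 v).trans (h'.1 v), fun v => (h.2 v).trans (h'.2 v)⟩

theorem Twins.mem_iff {x x' y y' : α} (hx : Twins F x x')
    (hy : Twins F y y') : (x, y) ∈ F ↔ (x', y') ∈ F :=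
  (hy.1 x).trans (hx.2 y')

theorem Twins.inter_prod [DecidableEq α] {L : Finset α} {t t' : α} (h : Twins F t t')
    (ht : t ∈ L) (ht' : t' ∈ L) : Twins (F ∩ L ×ˢ L) t t' := by
  constructor <;> intro v <;> simp only [mem_inter, mem_product, ht, ht', and_true, true_and]
  exacts [and_congr_left' (h.1 v), and_congr_left' (h.2 v)]

end Twins

section Basics

variable {α : Type*} [DecidableEq α] {Vbar V : Finset α} {Ebar A E : Finset (α × α)}

theorem mem_cluster_self {t : α} (ht : t ∈ Vbar) : t ∈ Cluster Vbar A t := ⟨ht, .refl⟩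

theorem mem_cluster_of_sink {t x : α} (ht : ∀ u, (t, u) ∉ A) :
    x ∈ Cluster Vbar A t ↔ x ∈ Vbar ∧ x = t := by
  refine ⟨fun ⟨hx, h⟩ => ⟨hx, ?_⟩, fun ⟨hx, h⟩ => ⟨hx, h ▸ .refl⟩⟩
  rcases h.cases_head with h | ⟨u, htu, -⟩
  exacts [h.symm, absurd htu (ht u)]

theorem Cluster.mono {A' : Finset (α × α)} (hA : A ⊆ A') {v x : α}
    (hx : x ∈ Cluster Vbar A v) : x ∈ Cluster Vbar A' v :=
  ⟨hx.1, ReflTransGen.mono (fun _ _ h => hA h) _ _ hx.2⟩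

def Covers (Vbar : Finset α) (A E : Finset (α × α)) (x y : α) : Prop :=
  ∃ e ∈ E, x ∈ Cluster Vbar A e.1 ∧ y ∈ Cluster Vbar A e.2

theorem represents_iff :
    (↑Ebar : Set (α × α)) = ⋃ e ∈ E, Cluster Vbar A e.1 ×ˢ Cluster Vbar A e.2 ↔
      ∀ x y, (x, y) ∈ Ebar ↔ Covers Vbar A E x y := by
  simp only [Set.ext_iff, Prod.forall, mem_coe, Set.mem_iUnion, Set.mem_prod, exists_prop,
    Covers]

namespace IsDagCompression

variable (hD : IsDagCompression Vbar Ebar V A E)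
include hD

theorem mem_iff_covers {x y : α} : (x, y) ∈ Ebar ↔ Covers Vbar A E x y :=
  represents_iff.1 hD.represents x y

theorem notMem_arcs {t : α} (ht : t ∈ Vbar) (u : α) : (t, u) ∉ A :=
  (hD.sinks t (hD.vbar_subset ht)).2 ht u

theorem mem_cluster_sink {t x : α} (ht : t ∈ Vbar) : x ∈ Cluster Vbar A t ↔ x = t := by
  rw [mem_cluster_of_sink (hD.notMem_arcs ht)]
  exact ⟨And.right, fun h => ⟨h ▸ ht, h⟩⟩

theorem notMem_vbar_of_mem_arcs {v w : α} (h : (v, w) ∈ A) : v ∉ Vbar :=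
  fun hv => hD.notMem_arcs hv w h

theorem mem_of_mem_edges {x y : α} (hx : x ∈ Vbar) (hy : y ∈ Vbar) (h : (x, y) ∈ E) :
    (x, y) ∈ Ebar :=
  hD.mem_iff_covers.2 ⟨_, h, mem_cluster_self hx, mem_cluster_self hy⟩

theorem fst_mem_of_mem_arcs {v w : α} (h : (v, w) ∈ A) : v ∈ V :=
  (mem_product.1 (hD.arcs_subset h)).1

end IsDagCompression

theorem isDagCompression_self (hE : Ebar ⊆ Vbar ×ˢ Vbar) :
    IsDagCompression Vbar Ebar Vbar ∅ Ebar where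
  vbar_subset := subset_rfl
  arcs_subset := empty_subset _
  acyclic v hv := by simpa [ArcRel] using TransGen.head'_iff.1 hv
  sinks v hv := by simp [hv]
  edges_subset := hE
  represents := represents_iff.2 fun x y => by
    have hsink (t : α) : ∀ u, (t, u) ∉ (∅ : Finset (α × α)) := fun _ => notMem_empty _
    refine ⟨fun h => ⟨(x, y), h, mem_cluster_self (mem_product.1 (hE h)).1,
      mem_cluster_self (mem_product.1 (hE h)).2⟩, ?_⟩
    rintro ⟨e, he, hx, hy⟩
    rw [mem_cluster_of_sink (hsink _)] at hx hy
    rwa [hx.2, hy.2]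

theorem exists_isOptimalDagCompression (hE : Ebar ⊆ Vbar ×ˢ Vbar) :
    ∃ V A E, IsOptimalDagCompression Vbar Ebar V A E := by
  classical
  have h : ∃ n, ∃ V A E, IsDagCompression Vbar Ebar V A E ∧ A.card + E.card = n :=
    ⟨_, Vbar, ∅, Ebar, isDagCompression_self hE, rfl⟩
  obtain ⟨V, A, E, hD, hn⟩ := Nat.find_spec h
  exact ⟨V, A, E, hD, fun V' A' E' hD' => hn ▸ Nat.find_min' h ⟨V', A', E', hD', rfl⟩⟩

theorem IsOptimalDagCompression.of_le {V' : Finset α} {A' E' : Finset (α × α)}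
    (hopt : IsOptimalDagCompression Vbar Ebar V A E) (hD' : IsDagCompression Vbar Ebar V' A' E')
    (hle : A'.card + E'.card ≤ A.card + E.card) : IsOptimalDagCompression Vbar Ebar V' A' E' :=
  ⟨hD', fun _ _ _ h => hle.trans (hopt.2 _ _ _ h)⟩

end Basics

section LoopRemoval

variable {α : Type*} [DecidableEq α] {Vbar V : Finset α} {Ebar A E : Finset (α × α)}

theorem arcRel_insert {s w : α} (a b : α) (h : ArcRel (insert (w, s) A) a b) :
    ArcRel A a b ∨ b = s := by
  rcases mem_insert.1 h with h | h
  exacts [Or.inr (Prod.mk.inj h).2, Or.inl h]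

namespace IsDagCompression

variable (hD : IsDagCompression Vbar Ebar V A E)
include hD

theorem replace_loop {s : α} {e : α × α} (hs : s ∈ Vbar) (he : e ∈ V ×ˢ V)
    (hs₁ : s ∈ Cluster Vbar A e.1) (hs₂ : s ∈ Cluster Vbar A e.2)
    (hsound : ∀ x ∈ Cluster Vbar A e.1, ∀ y ∈ Cluster Vbar A e.2, (x, y) ∈ Ebar) :
    IsDagCompression Vbar Ebar V A (insert e (E.erase (s, s))) :=
  { hD with
    edges_subset := insert_subset he ((erase_subset _ _).trans hD.edges_subset)
    represents := represents_iff.2 fun x y => by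
      refine hD.mem_iff_covers.trans ⟨?_, ?_⟩
      · rintro ⟨f, hf, hx, hy⟩
        by_cases hfs : f = (s, s)
        · subst hfs
          rw [hD.mem_cluster_sink hs] at hx hy
          exact ⟨e, mem_insert_self _ _, hx ▸ hs₁, hy ▸ hs₂⟩
        · exact ⟨f, mem_insert_of_mem (mem_erase.2 ⟨hfs, hf⟩), hx, hy⟩
      · rintro ⟨f, hf, hx, hy⟩
        rcases mem_insert.1 hf with rfl | hf
        · exact hD.mem_iff_covers.1 (hsound x hx y hy)
        · exact ⟨f, mem_of_mem_erase hf, hx, hy⟩ }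

theorem not_arcRel_insert {s w : α} (hs : s ∈ Vbar) (hw : w ∉ Vbar) (b : α) :
    ¬ ArcRel (insert (w, s) A) s b := by
  intro hb
  rcases mem_insert.1 hb with h | h
  exacts [hw ((Prod.mk.inj h).1 ▸ hs), hD.notMem_arcs hs b h]

theorem mem_cluster_insert_arc {s w v x : α} (hs : s ∈ Vbar) (hw : w ∉ Vbar)
    (hx : x ∈ Cluster Vbar (insert (w, s) A) v) :
    x ∈ Cluster Vbar A v ∨ (x = s ∧ ReflTransGen (ArcRel A) v w) := by
  have hr' := arcRel_insert (A := A) (w := w) (s := s)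
  have hdead := hD.not_arcRel_insert hs hw
  by_cases hxs : x = s
  · subst hxs
    rcases hx.2.cases_tail with h | ⟨z, hvz, hzx⟩
    · exact Or.inl (h ▸ mem_cluster_self hs)
    · have hvz := hvz.of_dead_end hr' hdead fun hz => hdead x (hz ▸ hzx)
      rcases mem_insert.1 hzx with h | h
      · exact Or.inr ⟨rfl, (Prod.mk.inj h).1 ▸ hvz⟩
      · exact Or.inl ⟨hs, hvz.tail h⟩
  · exact Or.inl ⟨hx.1, hx.2.of_dead_end hr' hdead hxs⟩

theorem insert_arc_erase_loop {s t w : α} {f : α × α} (hs : s ∈ Vbar) (hw : w ∈ V)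
    (hwV : w ∉ Vbar) (ht : t ∈ Cluster Vbar A w) (hts : Twins Ebar t s) (hf : f ∈ E)
    (hfs : f ≠ (s, s)) (hf₁ : s ∈ Cluster Vbar (insert (w, s) A) f.1)
    (hf₂ : s ∈ Cluster Vbar (insert (w, s) A) f.2) :
    IsDagCompression Vbar Ebar V (insert (w, s) A) (E.erase (s, s)) where
  vbar_subset := hD.vbar_subset
  arcs_subset := insert_subset (mem_product.2 ⟨hw, hD.vbar_subset hs⟩) hD.arcs_subset
  acyclic := transGen_irrefl_of_dead_end arcRel_insert (hD.not_arcRel_insert hs hwV) hD.acyclic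
  sinks v hv := by
    refine ⟨fun h => (hD.sinks v hv).1 fun u hu => h u (mem_insert_of_mem hu), fun hvV u hu => ?_⟩
    rcases mem_insert.1 hu with h | h
    exacts [hwV ((Prod.mk.inj h).1 ▸ hvV), hD.notMem_arcs hvV u h]
  edges_subset := (erase_subset _ _).trans hD.edges_subset
  represents := represents_iff.2 fun x y => by
    have twin_of_mem {v z : α} (hz : z ∈ Cluster Vbar (insert (w, s) A) v) :
        ∃ z' ∈ Cluster Vbar A v, Twins Ebar z' z := by
      rcases hD.mem_cluster_insert_arc hs hwV hz with h | ⟨rfl, hvw⟩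
      exacts [⟨z, h, .refl _ z⟩, ⟨t, ⟨ht.1, hvw.trans ht.2⟩, hts⟩]
    refine hD.mem_iff_covers.trans ⟨?_, ?_⟩
    · rintro ⟨g, hg, hx, hy⟩
      by_cases hgs : g = (s, s)
      · subst hgs
        rw [hD.mem_cluster_sink hs] at hx hy
        exact ⟨f, mem_erase.2 ⟨hfs, hf⟩, hx ▸ hf₁, hy ▸ hf₂⟩
      · exact ⟨g, mem_erase.2 ⟨hgs, hg⟩, Cluster.mono (subset_insert _ _) hx,
          Cluster.mono (subset_insert _ _) hy⟩
    · rintro ⟨g, hg, hx, hy⟩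
      obtain ⟨x', hx', hxx'⟩ := twin_of_mem hx
      obtain ⟨y', hy', hyy'⟩ := twin_of_mem hy
      rw [← hD.mem_iff_covers, ← hxx'.mem_iff hyy', hD.mem_iff_covers]
      exact ⟨g, mem_of_mem_erase hg, hx', hy'⟩

end IsDagCompression

end LoopRemoval

section Gadget

variable {α : Type*} [DecidableEq α] {Vbar V : Finset α} {Ebar A E : Finset (α × α)}

theorem arcRel_union_gadget {c : α} {Q : Finset α} (a b : α) (h : ArcRel (A ∪ {c} ×ˢ Q) a b) :
    ArcRel A a b ∨ a = c := by
  rcases mem_union.1 h with h | h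
  exacts [Or.inl h, Or.inr (mem_singleton.1 (mem_product.1 h).1)]

namespace IsDagCompression

variable (hD : IsDagCompression Vbar Ebar V A E) {c : α} {Q : Finset α} (hc : c ∉ V)
  (hQ : Q ⊆ Vbar)
include hD hc hQ

theorem not_arcRel_union_gadget (a : α) : ¬ ArcRel (A ∪ {c} ×ˢ Q) a c := by
  intro h
  rcases mem_union.1 h with h | h
  exacts [hc (mem_product.1 (hD.arcs_subset h)).2, hc (hD.vbar_subset (hQ (mem_product.1 h).2))]

theorem cluster_union_gadget {v : α} (hv : v ∈ V) :
    Cluster Vbar (A ∪ {c} ×ˢ Q) v = Cluster Vbar A v := by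
  refine Set.ext fun x => ⟨fun hx => ⟨hx.1, ?_⟩, Cluster.mono subset_union_left⟩
  exact hx.2.of_fresh_source arcRel_union_gadget (hD.not_arcRel_union_gadget hc hQ)
    fun h => hc (h ▸ hv)

theorem cluster_union_gadget_of_mem_edges {e : α × α} (he : e ∈ E) :
    Cluster Vbar (A ∪ {c} ×ˢ Q) e.1 = Cluster Vbar A e.1 ∧
      Cluster Vbar (A ∪ {c} ×ˢ Q) e.2 = Cluster Vbar A e.2 :=
  ⟨hD.cluster_union_gadget hc hQ (mem_product.1 (hD.edges_subset he)).1,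
    hD.cluster_union_gadget hc hQ (mem_product.1 (hD.edges_subset he)).2⟩

theorem mem_cluster_union_gadget {x : α} : x ∈ Cluster Vbar (A ∪ {c} ×ˢ Q) c ↔ x ∈ Q := by
  refine ⟨fun ⟨hx, hcx⟩ => ?_, fun hx => ⟨hQ hx, .single (mem_union_right _ (by simp [hx]))⟩⟩
  rcases hcx.cases_head with rfl | ⟨z, hcz, hzx⟩
  · exact absurd (hD.vbar_subset hx) hc
  rcases mem_union.1 hcz with h | h
  · exact absurd (hD.fst_mem_of_mem_arcs h) hc
  have hz : z ∈ Q := (mem_product.1 h).2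
  have hzx := hzx.of_fresh_source arcRel_union_gadget
    (hD.not_arcRel_union_gadget hc hQ) fun h => hc (h ▸ hD.vbar_subset (hQ hz))
  rwa [(hD.mem_cluster_sink (hQ hz)).1 ⟨hx, hzx⟩]

theorem gadget (hQne : Q.Nonempty) (hQQ : Q ×ˢ Q ⊆ Ebar) :
    IsDagCompression Vbar Ebar (insert c V) (A ∪ {c} ×ˢ Q) (insert (c, c) (E \ Q ×ˢ Q)) where
  vbar_subset := hD.vbar_subset.trans (subset_insert _ _)
  arcs_subset := union_subset
    (hD.arcs_subset.trans (product_subset_product (subset_insert _ _) (subset_insert _ _)))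
    (product_subset_product (by simp) ((hQ.trans hD.vbar_subset).trans (subset_insert _ _)))
  acyclic := transGen_irrefl_of_fresh_source arcRel_union_gadget
    (hD.not_arcRel_union_gadget hc hQ) hD.acyclic
  sinks v hv := by
    rcases mem_insert.1 hv with rfl | hv
    · obtain ⟨q, hq⟩ := hQne
      exact iff_of_false (fun h => h q (mem_union_right _ (by simp [hq])))
        fun h => hc (hD.vbar_subset h)
    · refine Iff.trans ⟨fun h u hu => h u (mem_union_left _ hu), fun h u hu => ?_⟩ (hD.sinks v hv)
      rcases mem_union.1 hu with hu | hu
      exacts [h u hu, hc (mem_singleton.1 (mem_product.1 hu).1 ▸ hv)]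
  edges_subset := insert_subset (by simp)
    (sdiff_subset.trans (hD.edges_subset.trans
      (product_subset_product (subset_insert _ _) (subset_insert _ _))))
  represents := represents_iff.2 fun x y => by
    have hcl {e : α × α} (he : e ∈ E) := hD.cluster_union_gadget_of_mem_edges hc hQ he
    refine hD.mem_iff_covers.trans ⟨?_, ?_⟩
    · rintro ⟨e, he, hx, hy⟩
      by_cases heQ : e ∈ Q ×ˢ Q
      · obtain ⟨he₁, he₂⟩ := mem_product.1 heQ
        rw [hD.mem_cluster_sink (hQ he₁)] at hx
        rw [hD.mem_cluster_sink (hQ he₂)] at hy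
        refine ⟨(c, c), mem_insert_self _ _, ?_, ?_⟩ <;>
          simp only [hD.mem_cluster_union_gadget hc hQ, hx, hy, he₁, he₂]
      · exact ⟨e, mem_insert_of_mem (mem_sdiff.2 ⟨he, heQ⟩), (hcl he).1 ▸ hx, (hcl he).2 ▸ hy⟩
    · rintro ⟨e, he, hx, hy⟩
      rcases mem_insert.1 he with rfl | he
      · rw [hD.mem_cluster_union_gadget hc hQ] at hx hy
        exact hD.mem_iff_covers.1 (hQQ (mem_product.2 ⟨hx, hy⟩))
      · have he := (mem_sdiff.1 he).1
        exact ⟨e, he, (hcl he).1 ▸ hx, (hcl he).2 ▸ hy⟩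

end IsDagCompression

theorem card_gadget_le (c : α) (Q : Finset α) :
    (A ∪ {c} ×ˢ Q).card + (insert (c, c) (E \ Q ×ˢ Q)).card + (E ∩ Q ×ˢ Q).card ≤
      A.card + E.card + Q.card + 1 := by
  have h₁ := card_union_le A ({c} ×ˢ Q)
  have h₂ := card_insert_le (c, c) (E \ Q ×ˢ Q)
  have h₃ := card_sdiff_add_card_inter E (Q ×ˢ Q)
  rw [card_product, card_singleton, one_mul] at h₁
  omega

end Gadget

section LoopFree

variable {α : Type*} [DecidableEq α] {Vbar V : Finset α} {Ebar A E : Finset (α × α)}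

def loopedVerts (Vbar : Finset α) (E : Finset (α × α)) : Finset α :=
  Vbar.filter fun u => (u, u) ∈ E

def TwinLoopFree (Vbar : Finset α) (Ebar E : Finset (α × α)) : Prop :=
  ∀ s ∈ Vbar, ∀ t ∈ Vbar, s ≠ t → Twins Ebar s t → (s, s) ∉ E

theorem loopedVerts_ssubset {E' : Finset (α × α)} {s : α} (hs : s ∈ Vbar) (hsE : (s, s) ∈ E)
    (hsE' : (s, s) ∉ E') (h : ∀ u ∈ Vbar, (u, u) ∈ E' → (u, u) ∈ E) :
    loopedVerts Vbar E' ⊂ loopedVerts Vbar E := by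
  refine (ssubset_iff_of_subset fun u hu => ?_).2 ⟨s, mem_filter.2 ⟨hs, hsE⟩, ?_⟩
  · obtain ⟨hu, huE'⟩ := mem_filter.1 hu
    exact mem_filter.2 ⟨hu, h u hu huE'⟩
  · exact fun h' => hsE' (mem_filter.1 h').2

namespace IsDagCompression

variable (hD : IsDagCompression Vbar Ebar V A E) {s t : α}
include hD

theorem exists_loop_removal_of_cover_left {e : α × α} (hs : s ∈ Vbar) (hts : Twins Ebar t s)
    (hloop : (s, s) ∈ E) (he : e ∈ E) (hse : s ∈ Cluster Vbar A e.1)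
    (hte : t ∈ Cluster Vbar A e.2) (hne : e ≠ (s, t)) :
    ∃ V' A' E', IsDagCompression Vbar Ebar V' A' E' ∧
      A'.card + E'.card ≤ A.card + E.card ∧ loopedVerts Vbar E' ⊂ loopedVerts Vbar E := by
  obtain ⟨he₁V, he₂V⟩ := mem_product.1 (hD.edges_subset he)
  have hcard := card_erase_of_mem hloop
  have hpos := card_pos.2 ⟨_, hloop⟩
  by_cases he₁ : e.1 = s
  · have he₂ : e.2 ∉ Vbar := fun h => hne (Prod.ext he₁ ((hD.mem_cluster_sink h).1 hte).symm)
    refine ⟨V, _, _, hD.insert_arc_erase_loop hs he₂V he₂ hte hts he ?_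
      (Cluster.mono (subset_insert _ _) hse) ⟨hs, .single (mem_insert_self _ _)⟩, ?_,
      loopedVerts_ssubset hs hloop (notMem_erase _ _) fun _ _ => mem_of_mem_erase⟩
    · rintro rfl
      exact he₂ hs
    · have := card_insert_le (e.2, s) A
      omega
  · refine ⟨V, A, _, hD.replace_loop (e := (e.1, s)) hs
      (mem_product.2 ⟨he₁V, hD.vbar_subset hs⟩) hse (mem_cluster_self hs) ?_, ?_,
      loopedVerts_ssubset hs hloop ?_ fun u _ hu => ?_⟩
    · intro x hx y hy
      rw [(hD.mem_cluster_sink hs).1 hy, ← (Twins.refl Ebar x).mem_iff hts]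
      exact hD.mem_iff_covers.2 ⟨e, he, hx, hte⟩
    · have := card_insert_le (e.1, s) (E.erase (s, s))
      omega
    · simp [Ne.symm he₁]
    · rcases mem_insert.1 hu with h | h
      exacts [absurd ((Prod.mk.inj h).1.symm.trans (Prod.mk.inj h).2) he₁, mem_of_mem_erase h]

theorem exists_loop_removal_of_cover_right {f : α × α} (hs : s ∈ Vbar) (hts : Twins Ebar t s)
    (hloop : (s, s) ∈ E) (hf : f ∈ E) (htf : t ∈ Cluster Vbar A f.1)
    (hsf : s ∈ Cluster Vbar A f.2) (hne : f ≠ (t, s)) :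
    ∃ V' A' E', IsDagCompression Vbar Ebar V' A' E' ∧
      A'.card + E'.card ≤ A.card + E.card ∧ loopedVerts Vbar E' ⊂ loopedVerts Vbar E := by
  obtain ⟨hf₁V, hf₂V⟩ := mem_product.1 (hD.edges_subset hf)
  have hcard := card_erase_of_mem hloop
  have hpos := card_pos.2 ⟨_, hloop⟩
  by_cases hf₂ : f.2 = s
  · have hf₁ : f.1 ∉ Vbar := fun h => hne (Prod.ext ((hD.mem_cluster_sink h).1 htf).symm hf₂)
    refine ⟨V, _, _, hD.insert_arc_erase_loop hs hf₁V hf₁ htf hts hf ?_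
      ⟨hs, .single (mem_insert_self _ _)⟩ (Cluster.mono (subset_insert _ _) hsf), ?_,
      loopedVerts_ssubset hs hloop (notMem_erase _ _) fun _ _ => mem_of_mem_erase⟩
    · rintro rfl
      exact hf₁ hs
    · have := card_insert_le (f.1, s) A
      omega
  · refine ⟨V, A, _, hD.replace_loop (e := (s, f.2)) hs
      (mem_product.2 ⟨hD.vbar_subset hs, hf₂V⟩) (mem_cluster_self hs) hsf ?_, ?_,
      loopedVerts_ssubset hs hloop ?_ fun u _ hu => ?_⟩
    · intro x hx y hy
      rw [(hD.mem_cluster_sink hs).1 hx, ← hts.mem_iff (Twins.refl Ebar y)]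
      exact hD.mem_iff_covers.2 ⟨f, hf, htf, hy⟩
    · have := card_insert_le (s, f.2) (E.erase (s, s))
      omega
    · simp [Ne.symm hf₂]
    · rcases mem_insert.1 hu with h | h
      exacts [absurd ((Prod.mk.inj h).2.symm.trans (Prod.mk.inj h).1) hf₂, mem_of_mem_erase h]

theorem exists_loop_removal_of_two_cycle [Infinite α] (hs : s ∈ Vbar) (ht : t ∈ Vbar)
    (hst : s ≠ t) (hts : Twins Ebar t s) (hloop : (s, s) ∈ E) (hst' : (s, t) ∈ E)
    (hts' : (t, s) ∈ E) :
    ∃ V' A' E', IsDagCompression Vbar Ebar V' A' E' ∧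
      A'.card + E'.card ≤ A.card + E.card ∧ loopedVerts Vbar E' ⊂ loopedVerts Vbar E := by
  obtain ⟨c, hc⟩ := Infinite.exists_notMem_finset V
  have hQ : {s, t} ⊆ Vbar := insert_subset hs (singleton_subset_iff.2 ht)
  have hss : (s, s) ∈ Ebar := hD.mem_of_mem_edges hs hs hloop
  have htwin : ∀ x ∈ ({s, t} : Finset α), Twins Ebar s x := by
    simp only [mem_insert, mem_singleton, forall_eq_or_imp, forall_eq]
    exact ⟨.refl _ s, hts.symm⟩
  have hQQ : ({s, t} : Finset α) ×ˢ {s, t} ⊆ Ebar := fun p hp =>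
    ((htwin _ (mem_product.1 hp).1).mem_iff (htwin _ (mem_product.1 hp).2)).1 hss
  have h3 : 3 ≤ (E ∩ ({s, t} : Finset α) ×ˢ {s, t}).card := by
    have hsub : {(s, s), (s, t), (t, s)} ⊆ E ∩ ({s, t} : Finset α) ×ˢ {s, t} := by
      simp [insert_subset_iff, hloop, hst', hts']
    refine le_of_eq_of_le (card_eq_three.2 ?_).symm (card_le_card hsub)
    exact ⟨_, _, _, by simp [hst], by simp [hst], by simp [hst, Ne.symm hst], rfl⟩
  have hcs : s ≠ c := fun h => hc (h ▸ hD.vbar_subset hs)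
  refine ⟨_, _, _, hD.gadget hc hQ (insert_nonempty _ _) hQQ, ?_,
    loopedVerts_ssubset hs hloop ?_ fun u hu h => ?_⟩
  · have := card_gadget_le (A := A) (E := E) c {s, t}
    rw [card_pair hst] at this
    omega
  · simp [hcs]
  · rcases mem_insert.1 h with h | h
    exacts [absurd ((Prod.mk.inj h).1 ▸ hu) fun h => hc (hD.vbar_subset h), (mem_sdiff.1 h).1]

theorem exists_loop_removal [Infinite α] (hs : s ∈ Vbar) (ht : t ∈ Vbar) (hst : s ≠ t)
    (hts : Twins Ebar t s) (hloop : (s, s) ∈ E) :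
    ∃ V' A' E', IsDagCompression Vbar Ebar V' A' E' ∧
      A'.card + E'.card ≤ A.card + E.card ∧ loopedVerts Vbar E' ⊂ loopedVerts Vbar E := by
  have hss : (s, s) ∈ Ebar := hD.mem_of_mem_edges hs hs hloop
  obtain ⟨e, he, hse, hte⟩ := hD.mem_iff_covers.1 (((Twins.refl _ s).mem_iff hts.symm).1 hss)
  obtain ⟨f, hf, htf, hsf⟩ := hD.mem_iff_covers.1 ((hts.symm.mem_iff (.refl _ s)).1 hss)
  by_cases hest : e = (s, t)
  · by_cases hfts : f = (t, s)
    · exact hD.exists_loop_removal_of_two_cycle hs ht hst hts hloop (hest ▸ he) (hfts ▸ hf)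
    · exact hD.exists_loop_removal_of_cover_right hs hts hloop hf htf hsf hfts
  · exact hD.exists_loop_removal_of_cover_left hs hts hloop he hse hte hest

end IsDagCompression

theorem IsOptimalDagCompression.exists_twinLoopFree [Infinite α]
    (hopt : IsOptimalDagCompression Vbar Ebar V A E) :
    ∃ V' A' E', IsOptimalDagCompression Vbar Ebar V' A' E' ∧ TwinLoopFree Vbar Ebar E' := by
  induction hn : (loopedVerts Vbar E).card using Nat.strong_induction_on generalizing V A E
    with | _ n ih =>
  by_cases hfree : TwinLoopFree Vbar Ebar E
  · exact ⟨V, A, E, hopt, hfree⟩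
  simp only [TwinLoopFree, not_forall, not_not] at hfree
  obtain ⟨s, hs, t, ht, hst, hst', hloop⟩ := hfree
  obtain ⟨V', A', E', hD', hle, hlt⟩ := hopt.1.exists_loop_removal hs ht hst hst'.symm hloop
  exact ih _ (hn ▸ card_lt_card hlt) (hopt.of_le hD' hle) rfl

end LoopFree

section Prune

variable {α : Type*} [DecidableEq α] {Vbar V : Finset α} {Ebar A E : Finset (α × α)}

/-- Like `IsDagCompression`, except that vertices outside `Vbar` may be sinks. -/
structure IsDagPrecompression (Vbar : Finset α) (Ebar : Finset (α × α)) (V : Finset α)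
    (A E : Finset (α × α)) : Prop where
  vbar_subset : Vbar ⊆ V
  arcs_subset : A ⊆ V ×ˢ V
  acyclic : ∀ v : α, ¬ TransGen (ArcRel A) v v
  notMem_arcs : ∀ t ∈ Vbar, ∀ u, (t, u) ∉ A
  edges_subset : E ⊆ V ×ˢ V
  represents : ∀ x y, (x, y) ∈ Ebar ↔ Covers Vbar A E x y

/-- Keeping only the vertices from which `Vbar` is reachable changes no cluster of a kept
vertex, and the discarded edges have an empty cluster at one end. -/
theorem IsDagPrecompression.exists_prune (h : IsDagPrecompression Vbar Ebar V A E) :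
    ∃ L : Finset α, IsDagCompression Vbar Ebar L (A ∩ L ×ˢ L) (E ∩ L ×ˢ L) := by
  classical
  set L := V.filter fun v => ∃ x ∈ Vbar, ReflTransGen (ArcRel A) v x
  have hmemL {v x : α} (hv : v ∈ V) (hx : x ∈ Vbar) (hvx : ReflTransGen (ArcRel A) v x) :
      v ∈ L := mem_filter.2 ⟨hv, x, hx, hvx⟩
  have hsnd {v w : α} (h' : (v, w) ∈ A) : w ∈ V := (mem_product.1 (h.arcs_subset h')).2
  have hsub : A ∩ L ×ˢ L ⊆ A := inter_subset_left
  have hpath {v x : α} (hv : v ∈ V) (hx : x ∈ Vbar) (hvx : ReflTransGen (ArcRel A) v x) :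
      ReflTransGen (ArcRel (A ∩ L ×ˢ L)) v x := by
    induction hvx using ReflTransGen.head_induction_on with
    | refl => exact .refl
    | @head a z haz hzx ih =>
      exact .head (mem_inter.2 ⟨haz, mem_product.2
        ⟨hmemL hv hx (.head haz hzx), hmemL (hsnd haz) hx hzx⟩⟩) (ih (hsnd haz))
  have hcl {v : α} (hv : v ∈ V) : Cluster Vbar (A ∩ L ×ˢ L) v = Cluster Vbar A v :=
    Set.ext fun x => ⟨Cluster.mono hsub, fun hx => ⟨hx.1, hpath hv hx.1 hx.2⟩⟩
  refine ⟨L, fun t ht => hmemL (h.vbar_subset ht) ht .refl, inter_subset_right,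
    fun v hv => h.acyclic v (TransGen.mono (fun _ _ h => hsub h) _ _ hv), fun v hv => ?_,
    inter_subset_right, represents_iff.2 fun x y => (h.represents x y).trans ⟨?_, ?_⟩⟩
  · refine ⟨fun hno => ?_, fun hv u hu => h.notMem_arcs v hv u (hsub hu)⟩
    obtain ⟨hvV, x, hx, hvx⟩ := mem_filter.1 hv
    rcases hvx.cases_head with rfl | ⟨z, hvz, hzx⟩
    · exact hx
    · exact absurd (mem_inter.2 ⟨hvz, mem_product.2 ⟨hv, hmemL (hsnd hvz) hx hzx⟩⟩) (hno z)
  · rintro ⟨e, he, hx, hy⟩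
    obtain ⟨he₁, he₂⟩ := mem_product.1 (h.edges_subset he)
    exact ⟨e, mem_inter.2 ⟨he, mem_product.2 ⟨hmemL he₁ hx.1 hx.2, hmemL he₂ hy.1 hy.2⟩⟩,
      hcl he₁ ▸ hx, hcl he₂ ▸ hy⟩
  · rintro ⟨e, he, hx, hy⟩
    exact ⟨e, (mem_inter.1 he).1, Cluster.mono hsub hx, Cluster.mono hsub hy⟩

end Prune

section Collapse

variable {α : Type*} [DecidableEq α] {Vbar V : Finset α} {Ebar A E F : Finset (α × α)}

def pullback (f : α → α) (V : Finset α) (F : Finset (α × α)) : Finset (α × α) :=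
  (V ×ˢ V).filter fun p => (f p.1, f p.2) ∈ F

theorem mem_pullback {f : α → α} {p : α × α} :
    p ∈ pullback f V F ↔ p.1 ∈ V ∧ p.2 ∈ V ∧ (f p.1, f p.2) ∈ F := by
  simp [pullback, and_assoc]

theorem Twins.pullback {f : α → α} {t t' : α} (h : Twins F (f t) (f t')) (ht : t ∈ V)
    (ht' : t' ∈ V) : Twins (pullback f V F) t t' := by
  constructor <;> intro v <;> simp only [mem_pullback, ht, ht', true_and]
  exacts [and_congr_right fun _ => h.1 (f v), and_congr_right fun _ => h.2 (f v)]

theorem card_pullback (f : α → α) (V : Finset α) (F : Finset (α × α)) :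
    (pullback f V F).card =
      ∑ p ∈ F, (V.filter (f · = p.1)).card * (V.filter (f · = p.2)).card := by
  rw [card_eq_sum_card_fiberwise fun q hq => (mem_pullback.1 hq).2.2]
  refine sum_congr rfl fun p hp => ?_
  rw [← card_product]
  congr 1
  ext q
  simp only [mem_filter, mem_pullback, mem_product, Prod.ext_iff]
  constructor
  · rintro ⟨⟨h₁, h₂, -⟩, e₁, e₂⟩
    exact ⟨⟨h₁, e₁⟩, h₂, e₂⟩
  · rintro ⟨⟨h₁, e₁⟩, h₂, e₂⟩
    exact ⟨⟨h₁, h₂, by rw [e₁, e₂]; exact hp⟩, e₁, e₂⟩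

def collapse (C : Finset α) (r x : α) : α := if x ∈ C then r else x

variable {C : Finset α} {r x : α}

theorem collapse_apply_of_mem (hx : x ∈ C) : collapse C r x = r := if_pos hx

theorem collapse_apply_of_notMem (hx : x ∉ C) : collapse C r x = x := if_neg hx

theorem collapse_mem_iff (hr : r ∈ C) : collapse C r x ∈ C ↔ x ∈ C := by
  by_cases hx : x ∈ C <;> simp [collapse, hx, hr]

theorem card_fiber_collapse_le_one (hr : r ∈ C) {y : α} (hy : y ∉ C) :
    (V.filter (collapse C r · = y)).card ≤ 1 := by
  refine card_le_one.2 fun a ha b hb => ?_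
  have key {z : α} (hz : z ∈ V.filter (collapse C r · = y)) : z = y := by
    have hz := (mem_filter.1 hz).2
    have hzC : z ∉ C := fun h => hy (hz ▸ (collapse_mem_iff hr).2 h)
    rwa [collapse_apply_of_notMem hzC] at hz
  rw [key ha, key hb]

theorem card_fiber_collapse_of_mem (hr : r ∈ C) (hCV : C ⊆ V) {y : α} (hy : y ∈ C) :
    (V.filter (collapse C r · = y)).card = if r = y then C.card else 0 := by
  split_ifs with hry
  · subst hry
    congr 1
    ext z
    by_cases hz : z ∈ C
    · simp [collapse_apply_of_mem hz, hz, hCV hz]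
    · simp only [mem_filter, collapse_apply_of_notMem hz, hz, iff_false, not_and]
      exact fun _ h => hz (h ▸ hr)
  · refine card_eq_zero.2 (filter_eq_empty_iff.2 fun z _ hz => hry ?_)
    rwa [collapse_apply_of_mem ((collapse_mem_iff hr).1 (hz ▸ hy))] at hz

theorem sum_card_fiber_collapse_le (hCV : C ⊆ V) (y : α) :
    ∑ r ∈ C, (V.filter (collapse C r · = y)).card ≤ C.card := by
  by_cases hy : y ∈ C
  · rw [sum_congr rfl fun r hr => card_fiber_collapse_of_mem hr hCV hy, sum_ite_eq', if_pos hy]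
  · exact (sum_le_sum fun r hr => card_fiber_collapse_le_one hr hy).trans (by simp)

theorem sum_card_fiber_collapse_mul_le (hCV : C ⊆ V) {p : α × α} (hp : ¬ (p.1 ∈ C ∧ p.1 = p.2)) :
    ∑ r ∈ C, (V.filter (collapse C r · = p.1)).card * (V.filter (collapse C r · = p.2)).card ≤
      C.card := by
  by_cases h₁ : p.1 ∈ C
  · by_cases h₂ : p.2 ∈ C
    · have hne : p.1 ≠ p.2 := fun h => hp ⟨h₁, h⟩
      refine (sum_eq_zero fun r hr => ?_).trans_le (Nat.zero_le _)
      rw [card_fiber_collapse_of_mem hr hCV h₁, card_fiber_collapse_of_mem hr hCV h₂]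
      split_ifs with hr₁ hr₂ <;> simp_all
    · calc _ ≤ ∑ r ∈ C, (V.filter (collapse C r · = p.1)).card * 1 :=
            sum_le_sum fun r hr => Nat.mul_le_mul_left _ (card_fiber_collapse_le_one hr h₂)
        _ ≤ C.card := by simpa using sum_card_fiber_collapse_le hCV p.1
  · calc _ ≤ ∑ r ∈ C, 1 * (V.filter (collapse C r · = p.2)).card :=
          sum_le_sum fun r hr => Nat.mul_le_mul_right _ (card_fiber_collapse_le_one hr h₁)
      _ ≤ C.card := by simpa using sum_card_fiber_collapse_le hCV p.2

theorem sum_card_pullback_collapse_le (hCV : C ⊆ V) (hF : ∀ c ∈ C, (c, c) ∉ F) :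
    ∑ r ∈ C, (pullback (collapse C r) V F).card ≤ C.card * F.card := by
  simp_rw [card_pullback]
  rw [sum_comm, mul_comm, ← smul_eq_mul, ← sum_const]
  refine sum_le_sum fun p hp => sum_card_fiber_collapse_mul_le hCV fun h => hF _ h.1 ?_
  rwa [show p = (p.1, p.1) from Prod.ext rfl h.2.symm] at hp

theorem exists_card_pullback_collapse_le (hCne : C.Nonempty) (hCV : C ⊆ V)
    (hA : ∀ c ∈ C, (c, c) ∉ A) (hE : ∀ c ∈ C, (c, c) ∉ E) :
    ∃ r ∈ C, (pullback (collapse C r) V A).card + (pullback (collapse C r) V E).card ≤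
      A.card + E.card := by
  refine exists_le_of_sum_le hCne ?_
  rw [sum_add_distrib, sum_const, smul_eq_mul, mul_add]
  exact add_le_add (sum_card_pullback_collapse_le hCV hA) (sum_card_pullback_collapse_le hCV hE)

end Collapse

section ClassCollapse

variable {α : Type*} [DecidableEq α] {Vbar V : Finset α} {Ebar A E : Finset (α × α)}
  {C : Finset α} {r : α}

theorem collapse_mem_vbar (hCV : C ⊆ Vbar) (hr : r ∈ C) {x : α} (hx : x ∈ Vbar) :
    collapse C r x ∈ Vbar := by
  by_cases h : x ∈ C
  · rw [collapse_apply_of_mem h]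
    exact hCV hr
  · rwa [collapse_apply_of_notMem h]

theorem twins_collapse (hC : ∀ c ∈ C, Twins Ebar c r) (x : α) : Twins Ebar x (collapse C r x) := by
  by_cases h : x ∈ C
  · rw [collapse_apply_of_mem h]
    exact hC x h
  · rw [collapse_apply_of_notMem h]
    exact .refl _ x

theorem collapse_mem_cluster_of_mem_pullback (hCV : C ⊆ Vbar) (hr : r ∈ C) {u x : α}
    (hx : x ∈ Cluster Vbar (pullback (collapse C r) V A) u) :
    collapse C r x ∈ Cluster Vbar A (collapse C r u) :=
  ⟨collapse_mem_vbar hCV hr hx.1,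
    ReflTransGen.lift (collapse C r) (fun _ _ h => (mem_pullback.1 h).2.2) _ _ hx.2⟩

namespace IsDagCompression

variable (hD : IsDagCompression Vbar Ebar V A E) (hCV : C ⊆ Vbar) (hr : r ∈ C)
include hD hCV hr

theorem reflTransGen_pullback_collapse {v y : α} (hvC : v ∉ C) (hy : y ∈ V)
    (h : ReflTransGen (ArcRel A) v (collapse C r y)) :
    ReflTransGen (ArcRel (pullback (collapse C r) V A)) v y := by
  generalize hz : collapse C r y = z at h
  induction h generalizing y with
  | refl =>
    have hyC : y ∉ C := fun h => hvC (hz ▸ (collapse_mem_iff hr).2 h)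
    rw [← hz, collapse_apply_of_notMem hyC]
  | @tail z₁ z _ hz₁z ih =>
    have hz₁C : z₁ ∉ C := fun h => hD.notMem_vbar_of_mem_arcs hz₁z (hCV h)
    have hz₁V := hD.fst_mem_of_mem_arcs hz₁z
    refine (ih hz₁V (collapse_apply_of_notMem hz₁C)).tail (mem_pullback.2 ⟨hz₁V, hy, ?_⟩)
    rwa [collapse_apply_of_notMem hz₁C, hz]

theorem exists_mem_cluster_pullback {v x : α} (hx : x ∈ Vbar) (hv : v ∈ V)
    (h : collapse C r x ∈ Cluster Vbar A v) :
    ∃ u ∈ V, collapse C r u = v ∧ x ∈ Cluster Vbar (pullback (collapse C r) V A) u := by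
  by_cases hvV : v ∈ Vbar
  · exact ⟨x, hD.vbar_subset hx, (hD.mem_cluster_sink hvV).1 h, mem_cluster_self hx⟩
  · have hvC : v ∉ C := fun h => hvV (hCV h)
    exact ⟨v, hv, collapse_apply_of_notMem hvC,
      hx, hD.reflTransGen_pullback_collapse hCV hr hvC (hD.vbar_subset hx) h.2⟩

theorem pullback_collapse (hC : ∀ c ∈ C, Twins Ebar c r) :
    IsDagPrecompression Vbar Ebar V (pullback (collapse C r) V A) (pullback (collapse C r) V E)
    where
  vbar_subset := hD.vbar_subset
  arcs_subset := filter_subset _ _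
  acyclic v hv := hD.acyclic _
    (TransGen.lift (collapse C r) (fun _ _ h => (mem_pullback.1 h).2.2) _ _ hv)
  notMem_arcs t ht u h := hD.notMem_arcs (collapse_mem_vbar hCV hr ht) _ (mem_pullback.1 h).2.2
  edges_subset := filter_subset _ _
  represents x y := by
    rw [(twins_collapse hC x).mem_iff (twins_collapse hC y), hD.mem_iff_covers]
    constructor
    · rintro ⟨e, he, hxe, hye⟩
      obtain ⟨he₁, he₂⟩ := mem_product.1 (hD.edges_subset he)
      have hx : x ∈ Vbar := by
        by_contra h
        exact h (collapse_apply_of_notMem (fun h' => h (hCV h')) ▸ hxe.1)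
      have hy : y ∈ Vbar := by
        by_contra h
        exact h (collapse_apply_of_notMem (fun h' => h (hCV h')) ▸ hye.1)
      obtain ⟨u, hu, hue, hxu⟩ := hD.exists_mem_cluster_pullback hCV hr hx he₁ hxe
      obtain ⟨w, hw, hwe, hyw⟩ := hD.exists_mem_cluster_pullback hCV hr hy he₂ hye
      exact ⟨(u, w), mem_pullback.2 ⟨hu, hw, by rw [hue, hwe]; exact he⟩, hxu, hyw⟩
    · rintro ⟨e, he, hx, hy⟩
      exact ⟨_, (mem_pullback.1 he).2.2, collapse_mem_cluster_of_mem_pullback hCV hr hx,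
        collapse_mem_cluster_of_mem_pullback hCV hr hy⟩

end IsDagCompression

theorem IsDagCompression.exists_collapse (hD : IsDagCompression Vbar Ebar V A E)
    (hCV : C ⊆ Vbar) (hCne : C.Nonempty) (hC : ∀ c ∈ C, ∀ c' ∈ C, Twins Ebar c c')
    (hloop : ∀ c ∈ C, (c, c) ∉ E) :
    ∃ r ∈ C, ∃ V' A' E', IsDagCompression Vbar Ebar V' A' E' ∧
      A'.card + E'.card ≤ A.card + E.card ∧
      (∀ t ∈ Vbar, ∀ t' ∈ Vbar, Twins A (collapse C r t) (collapse C r t') →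
        Twins E (collapse C r t) (collapse C r t') → Twins A' t t' ∧ Twins E' t t') ∧
      ∀ t ∈ Vbar, (t, t) ∈ E' → (collapse C r t, collapse C r t) ∈ E := by
  have hA (c : α) (_ : c ∈ C) : (c, c) ∉ A := fun h => hD.acyclic c (.single h)
  obtain ⟨r, hr, hcard⟩ :=
    exists_card_pullback_collapse_le hCne (hCV.trans hD.vbar_subset) hA hloop
  obtain ⟨L, hL⟩ := (hD.pullback_collapse hCV hr fun c hc => hC c hc r hr).exists_prune
  refine ⟨r, hr, L, _, _, hL, ?_, fun t ht t' ht' hA hE => ?_, fun t _ h =>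
    (mem_pullback.1 (mem_inter.1 h).1).2.2⟩
  · have := card_le_card (inter_subset_left (s₁ := pullback (collapse C r) V A) (s₂ := L ×ˢ L))
    have := card_le_card (inter_subset_left (s₁ := pullback (collapse C r) V E) (s₂ := L ×ˢ L))
    omega
  · have hV := hD.vbar_subset
    have hL := hL.vbar_subset
    exact ⟨(hA.pullback (hV ht) (hV ht')).inter_prod (hL ht) (hL ht'),
      (hE.pullback (hV ht) (hV ht')).inter_prod (hL ht) (hL ht')⟩

end ClassCollapse

section Uniform

variable {α : Type*} [DecidableEq α] {Vbar V : Finset α} {Ebar A E : Finset (α × α)}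

theorem IsOptimalDagCompression.exists_twins_of_twinLoopFree
    (hopt : IsOptimalDagCompression Vbar Ebar V A E) (hfree : TwinLoopFree Vbar Ebar E)
    {t₁ t₂ : α} (ht₁ : t₁ ∈ Vbar) (ht₂ : t₂ ∈ Vbar) (hne : t₁ ≠ t₂) (htw : Twins Ebar t₁ t₂) :
    ∃ V' A' E', IsOptimalDagCompression Vbar Ebar V' A' E' ∧ TwinLoopFree Vbar Ebar E' ∧
      (Twins A' t₁ t₂ ∧ Twins E' t₁ t₂) ∧
      ∀ u ∈ Vbar, ∀ u' ∈ Vbar, Twins Ebar u u' → Twins A u u' → Twins E u u' →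
        Twins A' u u' ∧ Twins E' u u' := by
  classical
  set C := Vbar.filter (Twins Ebar t₁)
  have hmem {u : α} : u ∈ C ↔ u ∈ Vbar ∧ Twins Ebar t₁ u := mem_filter
  have hC : ∀ c ∈ C, ∀ c' ∈ C, Twins Ebar c c' := fun c hc c' hc' =>
    (hmem.1 hc).2.symm.trans (hmem.1 hc').2
  have hloop (c : α) (hc : c ∈ C) : (c, c) ∉ E := by
    by_cases hct : c = t₁
    · exact hct ▸ hfree t₁ ht₁ t₂ ht₂ hne htw
    · exact hfree c (hmem.1 hc).1 t₁ ht₁ hct (hmem.1 hc).2.symm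
  obtain ⟨r, hr, V', A', E', hD', hle, htwins, hloops⟩ :=
    hopt.1.exists_collapse (filter_subset _ _) ⟨t₁, hmem.2 ⟨ht₁, .refl _ _⟩⟩ hC hloop
  have hin {u u' : α} (hu : u ∈ C) (hu' : u' ∈ C) : Twins A' u u' ∧ Twins E' u u' := by
    refine htwins u (hmem.1 hu).1 u' (hmem.1 hu').1 ?_ ?_ <;>
      rw [collapse_apply_of_mem hu, collapse_apply_of_mem hu'] <;> exact .refl _ r
  refine ⟨V', A', E', hopt.of_le hD' hle, fun u hu u' hu' huu' htw' hloop' => ?_,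
    hin (hmem.2 ⟨ht₁, .refl _ _⟩) (hmem.2 ⟨ht₂, htw⟩), fun u hu u' hu' htw' hA hE => ?_⟩
  · by_cases huC : u ∈ C
    · have := hloops u hu hloop'
      rw [collapse_apply_of_mem huC] at this
      exact hloop r hr this
    · have := hloops u hu hloop'
      rw [collapse_apply_of_notMem huC] at this
      exact hfree u hu u' hu' huu' htw' this
  · by_cases huC : u ∈ C
    · exact hin huC (hmem.2 ⟨hu', (hmem.1 huC).2.trans htw'⟩)
    · have hu'C : u' ∉ C := fun h => huC (hmem.2 ⟨hu, (hmem.1 h).2.trans htw'.symm⟩)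
      refine htwins u hu u' hu' ?_ ?_ <;>
        rwa [collapse_apply_of_notMem huC, collapse_apply_of_notMem hu'C]

theorem exists_optimal_twins_on [Infinite α] (hE : Ebar ⊆ Vbar ×ˢ Vbar)
    (P : Finset (α × α)) :
    ∃ V A E, IsOptimalDagCompression Vbar Ebar V A E ∧ TwinLoopFree Vbar Ebar E ∧
      ∀ t₁ ∈ Vbar, ∀ t₂ ∈ Vbar, (t₁, t₂) ∈ P → Twins Ebar t₁ t₂ →
        Twins A t₁ t₂ ∧ Twins E t₁ t₂ := by
  induction P using Finset.induction_on with
  | empty =>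
    obtain ⟨V, A, E, hopt⟩ := exists_isOptimalDagCompression hE
    obtain ⟨V', A', E', hopt', hfree⟩ := hopt.exists_twinLoopFree
    exact ⟨V', A', E', hopt', hfree, by simp⟩
  | insert p P _ ih =>
    obtain ⟨V, A, E, hopt, hfree, hP⟩ := ih
    by_cases hp : p.1 ∈ Vbar ∧ p.2 ∈ Vbar ∧ p.1 ≠ p.2 ∧ Twins Ebar p.1 p.2
    · obtain ⟨V', A', E', hopt', hfree', hpair, hpres⟩ :=
        hopt.exists_twins_of_twinLoopFree hfree hp.1 hp.2.1 hp.2.2.1 hp.2.2.2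
      refine ⟨V', A', E', hopt', hfree', fun t₁ ht₁ t₂ ht₂ hmem htw => ?_⟩
      rcases mem_insert.1 hmem with rfl | hmem
      · exact hpair
      · exact hpres t₁ ht₁ t₂ ht₂ htw (hP t₁ ht₁ t₂ ht₂ hmem htw).1 (hP t₁ ht₁ t₂ ht₂ hmem htw).2
    · refine ⟨V, A, E, hopt, hfree, fun t₁ ht₁ t₂ ht₂ hmem htw => ?_⟩
      rcases mem_insert.1 hmem with rfl | hmem
      · obtain rfl : t₁ = t₂ := by_contra fun hne => hp ⟨ht₁, ht₂, hne, htw⟩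
        exact ⟨.refl _ _, .refl _ _⟩
      · exact hP t₁ ht₁ t₂ ht₂ hmem htw

end Uniform

/-- every directed graph has an optimal DAG compression in which all twins
of the graph are also twins in `(V, A)` and in `(V, E)`. -/
theorem exists_optimal_compression_twins {α : Type*} [DecidableEq α] [Infinite α]
    (Vbar : Finset α) (Ebar : Finset (α × α)) (hE : Ebar ⊆ Vbar ×ˢ Vbar) :
    ∃ (V : Finset α) (A E : Finset (α × α)),
      IsOptimalDagCompression Vbar Ebar V A E ∧
      ∀ t₁ ∈ Vbar, ∀ t₂ ∈ Vbar, Twins Ebar t₁ t₂ → Twins A t₁ t₂ ∧ Twins E t₁ t₂ := by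
  obtain ⟨V, A, E, hopt, -, htwins⟩ := exists_optimal_twins_on hE (Vbar ×ˢ Vbar)
  exact ⟨V, A, E, hopt, fun t₁ ht₁ t₂ ht₂ => htwins t₁ ht₁ t₂ ht₂ (mem_product.2 ⟨ht₁, ht₂⟩)⟩
end

section
/- Every directed bipartite graph Ḡ = (V̄₁ ∪ V̄₂, Ē) has an optimal DAG compression (V, A, E) such that C(v) ⊆ V̄₂ holds for every cluster vertex v ∈ V ∖ V̄₁. -/
open Finset

section Aux

variable {α : Type*} [DecidableEq α]

lemma cluster_mono {Vbar : Finset α} {A : Finset (α × α)} {v x : α}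
    (h : Relation.ReflTransGen (ArcRel A) v x) :
    Cluster Vbar A x ⊆ Cluster Vbar A v := fun u hu => ⟨hu.1, h.trans hu.2⟩

lemma cluster_of_no_out {Vbar : Finset α} {A : Finset (α × α)} {v : α}
    (h : ∀ u, (v, u) ∉ A) : Cluster Vbar A v ⊆ {v} := by
  intro u hu
  rcases hu.2.cases_head with h' | ⟨c, hc, _⟩
  · exact h'.symm
  · exact absurd hc (h c)

lemma self_mem_cluster {Vbar : Finset α} {A : Finset (α × α)} {v : α} (hv : v ∈ Vbar) :
    v ∈ Cluster Vbar A v := ⟨hv, Relation.ReflTransGen.refl⟩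

lemma cluster_eq_singleton {Vbar V : Finset α} {A E Ebar : Finset (α × α)}
    (hD : IsDagCompression Vbar Ebar V A E) {v : α} (hv : v ∈ Vbar) :
    Cluster Vbar A v = {v} := by
  apply Set.Subset.antisymm
  · exact cluster_of_no_out (((hD.sinks v (hD.vbar_subset hv)).mpr hv))
  · intro u hu; rw [Set.mem_singleton_iff] at hu; subst hu; exact self_mem_cluster hv

lemma cluster_nonempty {Vbar V : Finset α} {A E Ebar : Finset (α × α)}
    (hD : IsDagCompression Vbar Ebar V A E) :
    ∀ v ∈ V, (Cluster Vbar A v).Nonempty := by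
  classical
  have key : ∀ n (v : α), v ∈ V →
      (V.filter (fun w => Relation.ReflTransGen (ArcRel A) v w)).card ≤ n →
      (Cluster Vbar A v).Nonempty := by
    intro n
    induction n with
    | zero =>
      intro v hv hcard
      exfalso
      have : v ∈ V.filter (fun w => Relation.ReflTransGen (ArcRel A) v w) :=
        Finset.mem_filter.mpr ⟨hv, Relation.ReflTransGen.refl⟩
      have := Finset.card_pos.mpr ⟨v, this⟩
      omega
    | succ n ih =>
      intro v hv hcard
      by_cases hs : ∀ u, (v, u) ∉ A
      · exact ⟨v, (hD.sinks v hv).mp hs, Relation.ReflTransGen.refl⟩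
      · push_neg at hs
        obtain ⟨y, hy⟩ := hs
        have hyV : y ∈ V := (Finset.mem_product.mp (hD.arcs_subset hy)).2
        have hsub : V.filter (fun w => Relation.ReflTransGen (ArcRel A) y w) ⊆
            (V.filter (fun w => Relation.ReflTransGen (ArcRel A) v w)).erase v := by
          intro w hw
          rw [Finset.mem_filter] at hw
          refine Finset.mem_erase.mpr ⟨?_, Finset.mem_filter.mpr ⟨hw.1, .head hy hw.2⟩⟩
          rintro rfl
          exact hD.acyclic _ (Relation.TransGen.head' hy hw.2)
        have hvmem : v ∈ V.filter (fun w => Relation.ReflTransGen (ArcRel A) v w) :=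
          Finset.mem_filter.mpr ⟨hv, Relation.ReflTransGen.refl⟩
        have hcard' : (V.filter (fun w => Relation.ReflTransGen (ArcRel A) y w)).card ≤ n := by
          have h1 := Finset.card_le_card hsub
          have h2 := Finset.card_erase_of_mem hvmem
          have h3 := Finset.card_pos.mpr ⟨v, hvmem⟩
          omega
        obtain ⟨u, hu⟩ := ih y hyV hcard'
        exact ⟨u, hu.1, .head hy hu.2⟩
  intro v hv
  exact key _ v hv le_rfl

lemma edge_pure {V₁ V₂ V : Finset α} {A E Ebar : Finset (α × α)}
    (hE : Ebar ⊆ V₁ ×ˢ V₂)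
    (hD : IsDagCompression (V₁ ∪ V₂) Ebar V A E) :
    ∀ p ∈ E, Cluster (V₁ ∪ V₂) A p.1 ⊆ ↑V₁ ∧ Cluster (V₁ ∪ V₂) A p.2 ⊆ ↑V₂ := by
  intro p hp
  have h1V : p.1 ∈ V := (Finset.mem_product.mp (hD.edges_subset hp)).1
  have h2V : p.2 ∈ V := (Finset.mem_product.mp (hD.edges_subset hp)).2
  obtain ⟨w₀, hw₀⟩ := cluster_nonempty hD p.1 h1V
  obtain ⟨s₀, hs₀⟩ := cluster_nonempty hD p.2 h2V
  have hmem : ∀ w ∈ Cluster (V₁ ∪ V₂) A p.1, ∀ s ∈ Cluster (V₁ ∪ V₂) A p.2,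
      (w, s) ∈ Ebar := by
    intro w hw s hs
    have : (w, s) ∈ (↑Ebar : Set (α × α)) := by
      rw [hD.represents]
      exact Set.mem_iUnion₂.mpr ⟨p, hp, Set.mem_prod.mpr ⟨hw, hs⟩⟩
    exact_mod_cast this
  constructor
  · intro w hw
    exact_mod_cast (Finset.mem_product.mp (hE (hmem w hw s₀ hs₀))).1
  · intro s hs
    exact_mod_cast (Finset.mem_product.mp (hE (hmem w₀ hw₀ s hs))).2

end Aux

section Main

variable {α : Type*} [DecidableEq α]

lemma trivial_compression {V₁ V₂ : Finset α} {Ebar : Finset (α × α)}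
    (hE : Ebar ⊆ V₁ ×ˢ V₂) :
    IsDagCompression (V₁ ∪ V₂) Ebar (V₁ ∪ V₂) ∅ Ebar := by
  have hVb : ∀ p ∈ Ebar, p.1 ∈ V₁ ∪ V₂ ∧ p.2 ∈ V₁ ∪ V₂ := by
    intro p hp
    have := Finset.mem_product.mp (hE hp)
    exact ⟨Finset.mem_union_left _ this.1, Finset.mem_union_right _ this.2⟩
  have hclus : ∀ v, v ∈ V₁ ∪ V₂ → Cluster (V₁ ∪ V₂) (∅ : Finset (α × α)) v = {v} := by
    intro v hv
    ext u
    simp only [Cluster, Set.mem_setOf_eq, Set.mem_singleton_iff]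
    constructor
    · intro h
      rcases h.2.cases_head with h' | ⟨c, hc, _⟩
      · exact h'.symm
      · exact absurd hc (Finset.notMem_empty _)
    · rintro rfl; exact ⟨hv, Relation.ReflTransGen.refl⟩
  refine ⟨subset_rfl, Finset.empty_subset _, ?_, ?_, ?_, ?_⟩
  · have key : ∀ a b : α, Relation.TransGen (ArcRel (∅ : Finset (α × α))) a b → False := by
      intro a b h
      induction h with
      | single h => exact absurd h (Finset.notMem_empty _)
      | tail _ h _ => exact absurd h (Finset.notMem_empty _)
    intro v h
    exact key v v h
  · intro v hv
    simp only [Finset.notMem_empty, not_false_iff, implies_true, true_iff]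
    exact hv
  · intro p hp; exact Finset.mem_product.mpr (hVb p hp)
  · ext ⟨w, s⟩
    constructor
    · intro h
      have hws : (w, s) ∈ Ebar := h
      refine Set.mem_iUnion₂.mpr ⟨(w, s), hws, ?_⟩
      rw [Set.mem_prod]
      constructor
      · rw [hclus _ (hVb _ hws).1]; rfl
      · rw [hclus _ (hVb _ hws).2]; rfl
    · intro h
      obtain ⟨e, he, hmem⟩ := Set.mem_iUnion₂.mp h
      rw [Set.mem_prod, hclus _ (hVb _ he).1, hclus _ (hVb _ he).2] at hmem
      obtain ⟨h1, h2⟩ := hmem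
      rw [Set.mem_singleton_iff] at h1 h2
      have : (w, s) = e := Prod.ext h1 h2
      rw [Finset.mem_coe, this]
      exact he

end Main

/-- every directed bipartite graph has an optimal DAG compression in which
every cluster vertex `v ∈ V ∖ V̄₁` has its cluster contained in the second shore `V̄₂`. -/
theorem exists_optimal_compression_one_shore {α : Type*} [DecidableEq α] [Infinite α]
    (V₁ V₂ : Finset α) (hdisj : Disjoint V₁ V₂)
    (Ebar : Finset (α × α)) (hE : Ebar ⊆ V₁ ×ˢ V₂) :
    ∃ (V : Finset α) (A E : Finset (α × α)),
      IsOptimalDagCompression (V₁ ∪ V₂) Ebar V A E ∧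
      ∀ v ∈ V, v ∉ V₁ → Cluster (V₁ ∪ V₂) A v ⊆ ↑V₂ := by
  classical
  set Vbar := V₁ ∪ V₂ with hVbardef
  -- obtain an optimal compression (V, A, E)
  have hSne : {n | ∃ (V : Finset α) (A E : Finset (α × α)),
      IsDagCompression Vbar Ebar V A E ∧ A.card + E.card = n}.Nonempty :=
    ⟨_, Vbar, ∅, Ebar, trivial_compression hE, rfl⟩
  obtain ⟨V, A, E, hD, hsize⟩ := Nat.sInf_mem hSne
  have hopt : ∀ (V'' : Finset α) (A'' E'' : Finset (α × α)),
      IsDagCompression Vbar Ebar V'' A'' E'' → A.card + E.card ≤ A''.card + E''.card := by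
    intro V'' A'' E'' h''
    rw [hsize]
    exact Nat.sInf_le ⟨V'', A'', E'', h'', rfl⟩
  have hpure := edge_pure hE hD
  have hne := cluster_nonempty hD
  have harcV : ∀ {p : α × α}, p ∈ A → p.1 ∈ V ∧ p.2 ∈ V :=
    fun hp => Finset.mem_product.mp (hD.arcs_subset hp)
  have hedgeV : ∀ {p : α × α}, p ∈ E → p.1 ∈ V ∧ p.2 ∈ V :=
    fun hp => Finset.mem_product.mp (hD.edges_subset hp)
  -- the set of "left" cluster vertices to be mirrored
  set M : Finset α := V.filter (fun x => x ∉ Vbar ∧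
    ∃ p ∈ E, p.1 ∉ Vbar ∧ Relation.ReflTransGen (ArcRel A) p.1 x) with hMdef
  -- fresh mirror vertices
  have hinf : ((↑V : Set α)ᶜ).Infinite := (V.finite_toSet).infinite_compl
  obtain ⟨F, hFsub, hFcard⟩ := hinf.exists_subset_card_eq M.card
  have hcards : M.card = F.card := hFcard.symm
  set ψ := Finset.equivOfCardEq hcards with hψdef
  set φ : α → α := fun x => if h : x ∈ M then (ψ ⟨x, h⟩ : α) else x with hφdef
  have hφF : ∀ x ∈ M, φ x ∈ F := by
    intro x hx
    simp only [hφdef, dif_pos hx]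
    exact (ψ ⟨x, hx⟩).2
  have hφV : ∀ x ∈ M, φ x ∉ V := fun x hx hmem => hFsub (hφF x hx) hmem
  have hφinj : ∀ x ∈ M, ∀ y ∈ M, φ x = φ y → x = y := by
    intro x hx y hy h
    simp only [hφdef, dif_pos hx, dif_pos hy] at h
    exact congrArg Subtype.val (ψ.injective (Subtype.ext h))
  -- facts about M
  have hMV : ∀ x ∈ M, x ∈ V := fun x hx => (Finset.mem_filter.mp hx).1
  have hMnb : ∀ x ∈ M, x ∉ Vbar := fun x hx => (Finset.mem_filter.mp hx).2.1
  have hMwit : ∀ x ∈ M, ∃ p ∈ E, p.1 ∉ Vbar ∧ Relation.ReflTransGen (ArcRel A) p.1 x :=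
    fun x hx => (Finset.mem_filter.mp hx).2.2
  have hMself : ∀ p ∈ E, p.1 ∉ Vbar → p.1 ∈ M := fun p hp h =>
    Finset.mem_filter.mpr ⟨(hedgeV hp).1, h, p, hp, h, Relation.ReflTransGen.refl⟩
  have hMmid : ∀ x ∈ M, ∀ z w, Relation.ReflTransGen (ArcRel A) x z → (z, w) ∈ A → z ∈ M := by
    intro x hx z w hreach harc
    have hzV : z ∈ V := (harcV harc).1
    have hznb : z ∉ Vbar := fun hz => ((hD.sinks z hzV).mpr hz) w harc
    obtain ⟨p, hp, h1, h2⟩ := hMwit x hx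
    exact Finset.mem_filter.mpr ⟨hzV, hznb, p, hp, h1, h2.trans hreach⟩
  have hMleft : ∀ x ∈ M, Cluster Vbar A x ⊆ ↑V₁ := by
    intro x hx
    obtain ⟨p, hp, h1, h2⟩ := hMwit x hx
    have hp1M : p.1 ∈ M := hMself p hp h1
    exact (cluster_mono h2).trans (hpure p hp).1
  have hMnprt : ∀ x ∈ M, ¬ (Cluster Vbar A x ⊆ ↑V₂) := by
    intro x hx hprt
    obtain ⟨u, hu⟩ := hne x (hMV x hx)
    exact Finset.disjoint_left.mp hdisj (hMleft x hx hu) (hprt hu)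
  -- the new compression
  set S₁ : Finset (α × α) := A.filter (fun p => Cluster Vbar A p.1 ⊆ ↑V₂) with hS₁def
  set S₂ : Finset (α × α) := A.filter (fun p => p.1 ∈ M ∧ p.2 ∈ M) with hS₂def
  set S₃ : Finset (α × α) := A.filter (fun p => p.1 ∈ M ∧ p.2 ∈ Vbar) with hS₃def
  set T₁ : Finset (α × α) := E.filter (fun p => p.1 ∈ Vbar) with hT₁def
  set T₂ : Finset (α × α) := E.filter (fun p => p.1 ∈ M) with hT₂def
  set A' : Finset (α × α) :=
    S₁ ∪ S₂.image (fun p => (φ p.2, φ p.1)) ∪ T₂.image (fun p => (φ p.1, p.2)) with hA'def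
  set E' : Finset (α × α) := T₁ ∪ S₃.image (fun p => (p.2, φ p.1)) with hE'def
  set V' : Finset α := (Vbar ∪ V.filter (fun x => Cluster Vbar A x ⊆ ↑V₂)) ∪ M.image φ
    with hV'def
  -- V' membership helpers
  have hV'1 : ∀ v ∈ Vbar, v ∈ V' := by
    intro v hv; rw [hV'def]
    exact Finset.mem_union_left _ (Finset.mem_union_left _ hv)
  have hV'2 : ∀ v, v ∈ V → Cluster Vbar A v ⊆ ↑V₂ → v ∈ V' := by
    intro v h1 h2; rw [hV'def]
    exact Finset.mem_union_left _ (Finset.mem_union_right _ (Finset.mem_filter.mpr ⟨h1, h2⟩))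
  have hV'3 : ∀ x ∈ M, φ x ∈ V' := by
    intro x hx; rw [hV'def]
    exact Finset.mem_union_right _ (Finset.mem_image_of_mem φ hx)
  -- A' membership helpers
  have hA'1 : ∀ {p : α × α}, p ∈ A → Cluster Vbar A p.1 ⊆ ↑V₂ → p ∈ A' := by
    intro p h1 h2; rw [hA'def]
    exact Finset.mem_union_left _ (Finset.mem_union_left _ (Finset.mem_filter.mpr ⟨h1, h2⟩))
  have hA'2 : ∀ {z x : α}, (z, x) ∈ A → z ∈ M → x ∈ M → (φ x, φ z) ∈ A' := by
    intro z x h1 h2 h3; rw [hA'def]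
    exact Finset.mem_union_left _ (Finset.mem_union_right _
      (Finset.mem_image.mpr ⟨(z, x), Finset.mem_filter.mpr ⟨h1, h2, h3⟩, rfl⟩))
  have hA'3 : ∀ {p : α × α}, p ∈ E → p.1 ∈ M → (φ p.1, p.2) ∈ A' := by
    intro p h1 h2; rw [hA'def]
    exact Finset.mem_union_right _
      (Finset.mem_image.mpr ⟨p, Finset.mem_filter.mpr ⟨h1, h2⟩, rfl⟩)
  -- case analysis for arcs of A'
  have harc' : ∀ a b, (a, b) ∈ A' →
      ((a, b) ∈ A ∧ Cluster Vbar A a ⊆ ↑V₂) ∨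
      (∃ p, p ∈ A ∧ p.1 ∈ M ∧ p.2 ∈ M ∧ a = φ p.2 ∧ b = φ p.1) ∨
      (∃ p, p ∈ E ∧ p.1 ∈ M ∧ a = φ p.1 ∧ b = p.2) := by
    intro a b hab
    rw [hA'def] at hab
    rcases Finset.mem_union.mp hab with hab | hab
    · rcases Finset.mem_union.mp hab with hab | hab
      · exact Or.inl ⟨(Finset.mem_filter.mp hab).1, (Finset.mem_filter.mp hab).2⟩
      · obtain ⟨p, hp, hpe⟩ := Finset.mem_image.mp hab
        obtain ⟨hpA, h1, h2⟩ := Finset.mem_filter.mp hp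
        exact Or.inr (Or.inl ⟨p, hpA, h1, h2,
          (congrArg Prod.fst hpe).symm, (congrArg Prod.snd hpe).symm⟩)
    · obtain ⟨p, hp, hpe⟩ := Finset.mem_image.mp hab
      obtain ⟨hpE, h1⟩ := Finset.mem_filter.mp hp
      exact Or.inr (Or.inr ⟨p, hpE, h1,
        (congrArg Prod.fst hpe).symm, (congrArg Prod.snd hpe).symm⟩)
  -- arcs from old vertices are old arcs
  have hOldArc : ∀ a b, (a, b) ∈ A' → a ∈ V → (a, b) ∈ A ∧ b ∈ V := by
    intro a b hab haV
    rcases harc' a b hab with ⟨h, _⟩ | ⟨p, _, _, h2, he1, _⟩ | ⟨p, _, h1, he1, _⟩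
    · exact ⟨h, (harcV h).2⟩
    · exact absurd (he1 ▸ haV) (hφV _ h2)
    · exact absurd (he1 ▸ haV) (hφV _ h1)
  have hOldReach : ∀ a b, Relation.ReflTransGen (ArcRel A') a b → a ∈ V →
      Relation.ReflTransGen (ArcRel A) a b ∧ b ∈ V := by
    intro a b h
    induction h with
    | refl => exact fun ha => ⟨Relation.ReflTransGen.refl, ha⟩
    | tail h harc ih =>
      intro ha
      obtain ⟨h1, h2⟩ := ih ha
      obtain ⟨h3, h4⟩ := hOldArc _ _ harc h2
      exact ⟨h1.tail h3, h4⟩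
  have hPrtReach : ∀ a b, a ∈ V → Cluster Vbar A a ⊆ ↑V₂ →
      Relation.ReflTransGen (ArcRel A) a b → Relation.ReflTransGen (ArcRel A') a b := by
    intro a b haV hprt h
    induction h with
    | refl => exact Relation.ReflTransGen.refl
    | tail h harc ih =>
      refine ih.tail ?_
      exact hA'1 harc (fun u hu => hprt (cluster_mono h hu))
  have hClusterOld : ∀ v, v ∈ V → Cluster Vbar A v ⊆ ↑V₂ →
      Cluster Vbar A' v = Cluster Vbar A v := by
    intro v hv hp
    ext u
    constructor
    · intro hu; exact ⟨hu.1, (hOldReach v u hu.2 hv).1⟩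
    · intro hu; exact ⟨hu.1, hPrtReach v u hv hp hu.2⟩
  have hNoOut' : ∀ v ∈ Vbar, ∀ u, (v, u) ∉ A' := by
    intro v hv u hvu
    have hvV : v ∈ V := hD.vbar_subset hv
    rcases harc' v u hvu with ⟨h, _⟩ | ⟨p, _, _, h2, he1, _⟩ | ⟨p, _, h1, he1, _⟩
    · exact (hD.sinks v hvV).mpr hv u h
    · exact hφV _ h2 (he1 ▸ hvV)
    · exact hφV _ h1 (he1 ▸ hvV)
  have hClusterVbar' : ∀ v ∈ Vbar, Cluster Vbar A' v = {v} := by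
    intro v hv
    refine Set.Subset.antisymm (cluster_of_no_out (hNoOut' v hv)) ?_
    intro u hu
    rw [Set.mem_singleton_iff] at hu
    subst hu
    exact self_mem_cluster hv
  -- mirror paths
  have hMirror : ∀ x ∈ M, ∀ z, Relation.ReflTransGen (ArcRel A) x z → z ∈ M →
      Relation.ReflTransGen (ArcRel A') (φ z) (φ x) := by
    intro x hx z hreach
    induction hreach with
    | refl => exact fun _ => Relation.ReflTransGen.refl
    | @tail c d h harc ih =>
      intro hdM
      have hcM : c ∈ M := hMmid x hx c d h harc
      exact Relation.ReflTransGen.head (hA'2 harc hcM hdM) (ih hcM)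
  -- reachability from fresh vertices
  have hFreshAux : ∀ s, s ∈ Vbar → ∀ a, Relation.ReflTransGen (ArcRel A') a s →
      ∀ x, x ∈ M → a = φ x →
      ∃ p ∈ E, p.1 ∈ M ∧ Relation.ReflTransGen (ArcRel A) p.1 x ∧
        s ∈ Cluster Vbar A p.2 := by
    intro s hs a h
    induction h using Relation.ReflTransGen.head_induction_on with
    | refl =>
      intro x hx heq
      exact absurd (heq ▸ hD.vbar_subset hs) (hφV x hx)
    | @head a c harc hrest ih =>
      intro x hx heq
      subst heq
      rcases harc' _ _ harc with ⟨hA, _⟩ | ⟨p, hpA, h1, h2, he1, he2⟩ | ⟨p, hpE, h1, he1, he2⟩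
      · exact absurd (harcV hA).1 (hφV x hx)
      · have hx2 : x = p.2 := hφinj x hx p.2 h2 he1
        obtain ⟨q, hq, hq1, hq2, hq3⟩ := ih p.1 h1 he2
        refine ⟨q, hq, hq1, hq2.tail ?_, hq3⟩
        show (p.1, x) ∈ A
        rw [hx2, Prod.mk.eta]
        exact hpA
      · have hx1 : x = p.1 := hφinj x hx p.1 h1 he1
        have h2V : p.2 ∈ V := (hedgeV hpE).2
        have := hOldReach _ s (he2 ▸ hrest) h2V
        exact ⟨p, hpE, h1, hx1 ▸ Relation.ReflTransGen.refl, hs, this.1⟩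
  have hFreshReach : ∀ x ∈ M, ∀ s, s ∈ Cluster Vbar A' (φ x) →
      ∃ p ∈ E, p.1 ∈ M ∧ Relation.ReflTransGen (ArcRel A) p.1 x ∧
        s ∈ Cluster Vbar A p.2 :=
    fun x hx s hs => hFreshAux s hs.1 _ hs.2 x hx rfl
  have hFreshBack : ∀ x ∈ M, ∀ p ∈ E, p.1 ∈ M → Relation.ReflTransGen (ArcRel A) p.1 x →
      ∀ s ∈ Cluster Vbar A p.2, s ∈ Cluster Vbar A' (φ x) := by
    intro x hx p hp h1 h2 s hs
    refine ⟨hs.1, ?_⟩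
    have step1 : Relation.ReflTransGen (ArcRel A') (φ x) (φ p.1) := hMirror p.1 h1 x h2 hx
    have step2 : ArcRel A' (φ p.1) p.2 := hA'3 hp h1
    have step3 : Relation.ReflTransGen (ArcRel A') p.2 s :=
      hPrtReach p.2 s (hedgeV hp).2 (hpure p hp).2 hs.2
    exact (step1.tail step2).trans step3
  -- acyclicity
  have hT1 : ∀ a b, Relation.TransGen (ArcRel A') a b → a ∈ V →
      Relation.TransGen (ArcRel A) a b ∧ b ∈ V := by
    intro a b h
    induction h with
    | single harc =>
      intro ha
      obtain ⟨h1, h2⟩ := hOldArc _ _ harc ha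
      exact ⟨Relation.TransGen.single h1, h2⟩
    | tail h harc ih =>
      intro ha
      obtain ⟨h1, h2⟩ := ih ha
      obtain ⟨h3, h4⟩ := hOldArc _ _ harc h2
      exact ⟨h1.tail h3, h4⟩
  have hT2 : ∀ a b, Relation.TransGen (ArcRel A') a b → b ∉ V →
      ∃ x y, x ∈ M ∧ y ∈ M ∧ a = φ x ∧ b = φ y ∧ Relation.TransGen (ArcRel A) y x := by
    intro a b h
    induction h with
    | single harc =>
      intro hb
      rcases harc' _ _ harc with ⟨hA, _⟩ | ⟨q, hqA, h1, h2, he1, he2⟩ | ⟨q, hqE, h1, he1, he2⟩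
      · exact absurd (harcV hA).2 hb
      · refine ⟨q.2, q.1, h2, h1, he1, he2, Relation.TransGen.single ?_⟩
        show (q.1, q.2) ∈ A
        rw [Prod.mk.eta]; exact hqA
      · exact absurd ((hedgeV hqE).2) (he2 ▸ hb)
    | @tail c b h harc ih =>
      intro hb
      rcases harc' _ _ harc with ⟨hA, _⟩ | ⟨q, hqA, h1, h2, he1, he2⟩ | ⟨q, hqE, h1, he1, he2⟩
      · exact absurd (harcV hA).2 hb
      · obtain ⟨x, y, hx, hy, ha, hc, ht⟩ := ih (he1 ▸ hφV q.2 h2)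
        have hy2 : y = q.2 := hφinj y hy q.2 h2 (hc.symm.trans he1)
        refine ⟨x, q.1, hx, h1, ha, he2, Relation.TransGen.head ?_ (hy2 ▸ ht)⟩
        show (q.1, q.2) ∈ A
        rw [Prod.mk.eta]; exact hqA
      · exact absurd ((hedgeV hqE).2) (he2 ▸ hb)
  have hacyc' : ∀ v : α, ¬ Relation.TransGen (ArcRel A') v v := by
    intro v hv
    by_cases hvV : v ∈ V
    · exact hD.acyclic v (hT1 v v hv hvV).1
    · obtain ⟨x, y, hx, hy, he1, he2, ht⟩ := hT2 v v hv hvV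
      have : x = y := hφinj x hx y hy (he1.symm.trans he2)
      exact hD.acyclic y (this ▸ ht)
  -- size bound
  have hsize' : A'.card + E'.card ≤ A.card + E.card := by
    have d12 : Disjoint S₁ S₂ := by
      rw [Finset.disjoint_left]
      intro p h1 h2
      exact hMnprt p.1 (Finset.mem_filter.mp h2).2.1 (Finset.mem_filter.mp h1).2
    have d13 : Disjoint S₁ S₃ := by
      rw [Finset.disjoint_left]
      intro p h1 h2
      exact hMnprt p.1 (Finset.mem_filter.mp h2).2.1 (Finset.mem_filter.mp h1).2
    have d23 : Disjoint S₂ S₃ := by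
      rw [Finset.disjoint_left]
      intro p h1 h2
      exact hMnb p.2 (Finset.mem_filter.mp h1).2.2 (Finset.mem_filter.mp h2).2.2
    have dT : Disjoint T₁ T₂ := by
      rw [Finset.disjoint_left]
      intro p h1 h2
      exact hMnb p.1 (Finset.mem_filter.mp h2).2 (Finset.mem_filter.mp h1).2
    have hcardA : S₁.card + S₂.card + S₃.card ≤ A.card := by
      have h1 : (S₁ ∪ S₂ ∪ S₃).card = S₁.card + S₂.card + S₃.card := by
        rw [Finset.card_union_of_disjoint (Finset.disjoint_union_left.mpr ⟨d13, d23⟩),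
          Finset.card_union_of_disjoint d12]
      rw [← h1]
      refine Finset.card_le_card ?_
      refine Finset.union_subset (Finset.union_subset ?_ ?_) ?_
      · exact Finset.filter_subset _ _
      · exact Finset.filter_subset _ _
      · exact Finset.filter_subset _ _
    have hcardE : T₁.card + T₂.card ≤ E.card := by
      have h1 : (T₁ ∪ T₂).card = T₁.card + T₂.card := Finset.card_union_of_disjoint dT
      rw [← h1]
      refine Finset.card_le_card (Finset.union_subset ?_ ?_)
      · rw [hT₁def]; exact Finset.filter_subset _ _
      · rw [hT₂def]; exact Finset.filter_subset _ _
    have hA'le : A'.card ≤ S₁.card + S₂.card + T₂.card := by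
      rw [hA'def]
      calc (S₁ ∪ S₂.image (fun p => (φ p.2, φ p.1)) ∪ T₂.image (fun p => (φ p.1, p.2))).card
          ≤ (S₁ ∪ S₂.image (fun p => (φ p.2, φ p.1))).card
            + (T₂.image (fun p => (φ p.1, p.2))).card := Finset.card_union_le _ _
        _ ≤ S₁.card + (S₂.image (fun p => (φ p.2, φ p.1))).card
            + (T₂.image (fun p => (φ p.1, p.2))).card := by
            have := Finset.card_union_le S₁ (S₂.image (fun p => (φ p.2, φ p.1)))
            omega
        _ ≤ S₁.card + S₂.card + T₂.card := by
            have := Finset.card_image_le (s := S₂) (f := fun p => (φ p.2, φ p.1))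
            have := Finset.card_image_le (s := T₂) (f := fun p => (φ p.1, p.2))
            omega
    have hE'le : E'.card ≤ T₁.card + S₃.card := by
      rw [hE'def]
      calc (T₁ ∪ S₃.image (fun p => (p.2, φ p.1))).card
          ≤ T₁.card + (S₃.image (fun p => (p.2, φ p.1))).card := Finset.card_union_le _ _
        _ ≤ T₁.card + S₃.card := by
            have := Finset.card_image_le (s := S₃) (f := fun p => (p.2, φ p.1))
            omega
    omega
  -- structure fields
  have harcs' : A' ⊆ V' ×ˢ V' := by
    intro p hp
    have hp' : (p.1, p.2) ∈ A' := by rw [Prod.mk.eta]; exact hp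
    rcases harc' p.1 p.2 hp' with ⟨hA, hprt⟩ | ⟨q, hqA, h1, h2, he1, he2⟩ |
        ⟨q, hqE, h1, he1, he2⟩
    · refine Finset.mem_product.mpr ⟨hV'2 p.1 (harcV hA).1 hprt, hV'2 p.2 (harcV hA).2 ?_⟩
      exact fun u hu => hprt (cluster_mono (Relation.ReflTransGen.single hA) hu)
    · exact Finset.mem_product.mpr ⟨he1 ▸ hV'3 q.2 h2, he2 ▸ hV'3 q.1 h1⟩
    · exact Finset.mem_product.mpr ⟨he1 ▸ hV'3 q.1 h1,
        he2 ▸ hV'2 q.2 (hedgeV hqE).2 (hpure q hqE).2⟩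
  have hedges' : E' ⊆ V' ×ˢ V' := by
    intro p hp
    rw [hE'def] at hp
    rcases Finset.mem_union.mp hp with hp' | hp'
    · obtain ⟨hpE, h1⟩ := Finset.mem_filter.mp hp'
      exact Finset.mem_product.mpr ⟨hV'1 p.1 h1,
        hV'2 p.2 (hedgeV hpE).2 (hpure p hpE).2⟩
    · obtain ⟨r, hr, rfl⟩ := Finset.mem_image.mp hp'
      obtain ⟨hrA, hr1, hr2⟩ := Finset.mem_filter.mp hr
      exact Finset.mem_product.mpr ⟨hV'1 r.2 hr2, hV'3 r.1 hr1⟩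
  have hsinks' : ∀ v ∈ V', ((∀ u, (v, u) ∉ A') ↔ v ∈ Vbar) := by
    intro v hv
    constructor
    · intro hno
      by_contra hnb
      rw [hV'def] at hv
      rcases Finset.mem_union.mp hv with hv' | hv'
      · rcases Finset.mem_union.mp hv' with hv'' | hv''
        · exact hnb hv''
        · obtain ⟨hvV, hprt⟩ := Finset.mem_filter.mp hv''
          have hout : ¬ (∀ u, (v, u) ∉ A) := fun h => hnb ((hD.sinks v hvV).mp h)
          push_neg at hout
          obtain ⟨u, hu⟩ := hout
          exact hno u (hA'1 hu hprt)
      · obtain ⟨x, hxM, rfl⟩ := Finset.mem_image.mp hv'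
        obtain ⟨p, hp, hp1, hp2⟩ := hMwit x hxM
        have hp1M : p.1 ∈ M := hMself p hp hp1
        rcases hp2.cases_tail with heq | ⟨z, hz1, hz2⟩
        · refine hno p.2 ?_
          have := hA'3 hp hp1M
          rwa [← heq] at this
        · have hzM : z ∈ M := hMmid p.1 hp1M z x hz1 hz2
          exact hno (φ z) (hA'2 hz2 hzM hxM)
    · intro hvb u
      exact hNoOut' v hvb u
  have hrep' : (↑Ebar : Set (α × α)) =
      ⋃ e ∈ E', Cluster Vbar A' e.1 ×ˢ Cluster Vbar A' e.2 := by
    ext ⟨w, s⟩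
    constructor
    · intro hws
      rw [hD.represents] at hws
      obtain ⟨p, hp, hmem⟩ := Set.mem_iUnion₂.mp hws
      have hw : w ∈ Cluster Vbar A p.1 := hmem.1
      have hs : s ∈ Cluster Vbar A p.2 := hmem.2
      by_cases h1 : p.1 ∈ Vbar
      · have hw1 : w = p.1 := by
          have := cluster_eq_singleton hD h1
          rw [this] at hw
          exact hw
        refine Set.mem_iUnion₂.mpr ⟨p, ?_, ?_, ?_⟩
        · rw [hE'def]
          exact Finset.mem_union_left _ (Finset.mem_filter.mpr ⟨hp, h1⟩)
        · rw [hClusterVbar' p.1 h1]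
          exact hw1
        · rw [hClusterOld p.2 (hedgeV hp).2 (hpure p hp).2]
          exact hs
      · have h1M : p.1 ∈ M := hMself p hp h1
        rcases hw.2.cases_tail with heq | ⟨z, hz1, hz2⟩
        · exact absurd (heq ▸ hw.1) h1
        · have hzM : z ∈ M := hMmid p.1 h1M z w hz1 hz2
          refine Set.mem_iUnion₂.mpr ⟨(w, φ z), ?_, ?_, ?_⟩
          · rw [hE'def]
            exact Finset.mem_union_right _
              (Finset.mem_image.mpr ⟨(z, w), Finset.mem_filter.mpr ⟨hz2, hzM, hw.1⟩, rfl⟩)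
          · exact self_mem_cluster hw.1
          · exact hFreshBack z hzM p hp h1M hz1 s hs
    · intro hws
      obtain ⟨q, hq, hmem⟩ := Set.mem_iUnion₂.mp hws
      rw [hE'def] at hq
      rcases Finset.mem_union.mp hq with hq' | hq'
      · obtain ⟨hqE, hq1⟩ := Finset.mem_filter.mp hq'
        rw [hD.represents]
        refine Set.mem_iUnion₂.mpr ⟨q, hqE, ?_, ?_⟩
        · have := hmem.1
          rw [hClusterVbar' q.1 hq1] at this
          rw [cluster_eq_singleton hD hq1]
          exact this
        · have := hmem.2
          rwa [hClusterOld q.2 (hedgeV hqE).2 (hpure q hqE).2] at this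
      · obtain ⟨r, hr, hre⟩ := Finset.mem_image.mp hq'
        obtain ⟨hrA, hr1, hr2⟩ := Finset.mem_filter.mp hr
        have hq1 : q.1 = r.2 := (congrArg Prod.fst hre).symm
        have hq2 : q.2 = φ r.1 := (congrArg Prod.snd hre).symm
        have hwK : w = r.2 := by
          have := hmem.1
          rw [hq1, hClusterVbar' r.2 hr2] at this
          exact this
        have hsK : s ∈ Cluster Vbar A' (φ r.1) := by
          have := hmem.2
          rwa [hq2] at this
        obtain ⟨p, hp, hp1, hp2, hps⟩ := hFreshReach r.1 hr1 s hsK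
        rw [hD.represents]
        refine Set.mem_iUnion₂.mpr ⟨p, hp, ⟨hwK ▸ hr2, ?_⟩, hps⟩
        refine hwK ▸ hp2.tail ?_
        show (r.1, r.2) ∈ A
        rw [Prod.mk.eta]
        exact hrA
  have hcomp' : IsDagCompression Vbar Ebar V' A' E' :=
    ⟨fun v hv => hV'1 v hv, harcs', hacyc', hsinks', hedges', hrep'⟩
  -- final property
  have hfinal : ∀ v ∈ V', v ∉ V₁ → Cluster Vbar A' v ⊆ ↑V₂ := by
    intro v hv hv1
    rw [hV'def] at hv
    rcases Finset.mem_union.mp hv with hv' | hv'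
    · rcases Finset.mem_union.mp hv' with hv'' | hv''
      · have hv2 : v ∈ V₂ := by
          rw [hVbardef] at hv''
          rcases Finset.mem_union.mp hv'' with h | h
          · exact absurd h hv1
          · exact h
        rw [hClusterVbar' v hv'']
        intro u hu
        rw [Set.mem_singleton_iff] at hu
        subst hu
        exact hv2
      · obtain ⟨hvV, hprt⟩ := Finset.mem_filter.mp hv''
        rw [hClusterOld v hvV hprt]
        exact hprt
    · obtain ⟨x, hxM, rfl⟩ := Finset.mem_image.mp hv'
      intro s hs
      obtain ⟨p, hp, _, _, hps⟩ := hFreshReach x hxM s hs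
      exact (hpure p hp).2 hps
  exact ⟨V', A', E', ⟨hcomp',
    fun V'' A'' E'' h'' => le_trans hsize' (hopt V'' A'' E'' h'')⟩, hfinal⟩
end

section
/- Every directed bipartite graph Ḡ = (V̄₁ ∪ V̄₂, Ē) has an optimal DAG compression (V, A, E) such that for every pair of distinct vertices t₁, t₂ ∈ V̄₁ that are twins in Ḡ, each of t₁ and t₂ is an endpoint of at most one compression edge of E. -/
open Finset

section AuxCompression

set_option linter.unusedSectionVars false

variable {α : Type*} [DecidableEq α]

lemma reach_of_sink {A : Finset (α × α)} {t u : α} (h : ∀ w, (t, w) ∉ A)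
    (hr : Relation.ReflTransGen (ArcRel A) t u) : u = t := by
  rcases hr.cases_head with h' | ⟨c, hc, _⟩
  · exact h'.symm
  · exact absurd hc (h c)

lemma exists_sink {Vbar V : Finset α} {A : Finset (α × α)}
    (hA : A ⊆ V ×ˢ V) (hacyc : ∀ v, ¬ Relation.TransGen (ArcRel A) v v)
    (hsinks : ∀ v ∈ V, ((∀ u, (v, u) ∉ A) ↔ v ∈ Vbar)) :
    ∀ u ∈ V, ∃ s, s ∈ Vbar ∧ Relation.ReflTransGen (ArcRel A) u s := by
  classical
  have H : ∀ n u, u ∈ V → (V.filter fun w => Relation.TransGen (ArcRel A) u w).card = n →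
      ∃ s, s ∈ Vbar ∧ Relation.ReflTransGen (ArcRel A) u s := by
    intro n
    induction n using Nat.strong_induction_on with
    | _ n ih =>
      intro u hu hn
      by_cases hsk : ∀ w, (u, w) ∉ A
      · exact ⟨u, (hsinks u hu).1 hsk, Relation.ReflTransGen.refl⟩
      · push_neg at hsk
        obtain ⟨w, hw⟩ := hsk
        have hwV : w ∈ V := (Finset.mem_product.1 (hA hw)).2
        have hsub : (V.filter fun x => Relation.TransGen (ArcRel A) w x) ⊂
            (V.filter fun x => Relation.TransGen (ArcRel A) u x) := by
          rw [Finset.ssubset_def]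
          constructor
          · intro x hx
            rw [Finset.mem_filter] at hx ⊢
            exact ⟨hx.1, Relation.TransGen.head hw hx.2⟩
          · intro hcon
            have hmem : w ∈ V.filter fun x => Relation.TransGen (ArcRel A) u x :=
              Finset.mem_filter.2 ⟨hwV, Relation.TransGen.single hw⟩
            have := Finset.mem_filter.1 (hcon hmem)
            exact hacyc w this.2
        obtain ⟨s, hs1, hs2⟩ := ih _ (hn ▸ Finset.card_lt_card hsub) w hwV rfl
        exact ⟨s, hs1, Relation.ReflTransGen.head hw hs2⟩
  intro u hu; exact H _ u hu rfl

end AuxCompression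

/-- every directed bipartite graph has an optimal DAG compression in which
every pair of distinct twins in the first shore has at most one incident compression
edge each. -/
theorem exists_optimal_compression_twins_one_edge {α : Type*} [DecidableEq α] [Infinite α]
    (V₁ V₂ : Finset α) (hdisj : Disjoint V₁ V₂)
    (Ebar : Finset (α × α)) (hE : Ebar ⊆ V₁ ×ˢ V₂) :
    ∃ (V : Finset α) (A E : Finset (α × α)),
      IsOptimalDagCompression (V₁ ∪ V₂) Ebar V A E ∧
      ∀ t₁ ∈ V₁, ∀ t₂ ∈ V₁, t₁ ≠ t₂ → Twins Ebar t₁ t₂ →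
        (E.filter (fun e => e.1 = t₁ ∨ e.2 = t₁)).card ≤ 1 ∧
        (E.filter (fun e => e.1 = t₂ ∨ e.2 = t₂)).card ≤ 1 := by
  classical
  set Vbar := V₁ ∪ V₂ with hVbarDef
  -- the trivial compression
  have hD₀ : IsDagCompression Vbar Ebar Vbar ∅ Ebar := by
    refine ⟨Finset.Subset.refl _, by simp, ?_, ?_, ?_, ?_⟩
    · intro v hv
      obtain ⟨c, hc, -⟩ := Relation.TransGen.head'_iff.1 hv
      exact absurd hc (Finset.notMem_empty _)
    · intro v hv
      exact iff_of_true (fun u => Finset.notMem_empty _) hv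
    · intro e he
      have h2 := Finset.mem_product.1 (hE he)
      exact Finset.mem_product.2 ⟨Finset.mem_union_left _ h2.1, Finset.mem_union_right _ h2.2⟩
    · ext x
      obtain ⟨a, b⟩ := x
      simp only [Set.mem_iUnion, Set.mem_prod, Finset.mem_coe]
      constructor
      · intro hab
        have h2 := Finset.mem_product.1 (hE hab)
        exact ⟨(a, b), hab,
          ⟨Finset.mem_union_left _ h2.1, Relation.ReflTransGen.refl⟩,
          ⟨Finset.mem_union_right _ h2.2, Relation.ReflTransGen.refl⟩⟩
      · rintro ⟨e, he, ⟨-, h1⟩, ⟨-, h2⟩⟩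
        have e1 : a = e.1 := reach_of_sink (fun w => Finset.notMem_empty _) h1
        have e2 : b = e.2 := reach_of_sink (fun w => Finset.notMem_empty _) h2
        rw [e1, e2]
        exact he
  set S : Set ℕ := {n | ∃ (V : Finset α) (A E : Finset (α × α)),
    IsDagCompression Vbar Ebar V A E ∧ A.card + E.card = n} with hSdef
  have hSne : S.Nonempty := ⟨_, Vbar, ∅, Ebar, hD₀, rfl⟩
  have hopt_of : ∀ (V : Finset α) (A E : Finset (α × α)),
      IsDagCompression Vbar Ebar V A E → A.card + E.card = sInf S →
      IsOptimalDagCompression Vbar Ebar V A E := by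
    intro V A E h hs
    exact ⟨h, fun V' A' E' h' => hs ▸ Nat.sInf_le ⟨V', A', E', h', rfl⟩⟩
  set S₂ : Set ℕ := {n | ∃ (V : Finset α) (A E : Finset (α × α)),
    IsDagCompression Vbar Ebar V A E ∧ A.card + E.card = sInf S ∧ E.card = n} with hS₂def
  have hS₂ne : S₂.Nonempty := by
    obtain ⟨V₀, A₀, E₀, h₀, hs₀⟩ := Nat.sInf_mem hSne
    exact ⟨E₀.card, V₀, A₀, E₀, h₀, hs₀, rfl⟩
  obtain ⟨V, A, E, hD, hsz, hEc⟩ := Nat.sInf_mem hS₂ne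
  refine ⟨V, A, E, hopt_of V A E hD hsz, ?_⟩
  -- general facts about D
  have hsinkex := exists_sink hD.arcs_subset hD.acyclic hD.sinks
  have hcov : ∀ e ∈ E, ∀ x z : α, x ∈ Cluster Vbar A e.1 → z ∈ Cluster Vbar A e.2 →
      (x, z) ∈ Ebar := by
    intro e he x z hx hz
    have : (x, z) ∈ (↑Ebar : Set (α × α)) := by
      rw [hD.represents]
      simp only [Set.mem_iUnion, Set.mem_prod]
      exact ⟨e, he, hx, hz⟩
    exact this
  have htarget : ∀ e ∈ E, ∀ t ∈ V₁, t ∉ Cluster Vbar A e.2 := by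
    intro e he t ht hmem
    have he1V : e.1 ∈ V := (Finset.mem_product.1 (hD.edges_subset he)).1
    obtain ⟨s, hs, hrs⟩ := hsinkex e.1 he1V
    have := (Finset.mem_product.1 (hE (hcov e he s t ⟨hs, hrs⟩ hmem))).2
    exact Finset.disjoint_left.1 hdisj ht this
  -- the key claim
  have key : ∀ t₁ ∈ V₁, ∀ t₂ ∈ V₁, t₁ ≠ t₂ → Twins Ebar t₁ t₂ →
      (E.filter (fun e => e.1 = t₁ ∨ e.2 = t₁)).card ≤ 1 := by
    intro t₁ ht₁ t₂ ht₂ hne htw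
    have ht₁b : t₁ ∈ Vbar := Finset.mem_union_left _ ht₁
    have ht₂b : t₂ ∈ Vbar := Finset.mem_union_left _ ht₂
    have ht₁V : t₁ ∈ V := hD.vbar_subset ht₁b
    have ht₂V : t₂ ∈ V := hD.vbar_subset ht₂b
    have hsinkt₁ : ∀ w, (t₁, w) ∉ A := (hD.sinks t₁ ht₁V).2 ht₁b
    have hsinkt₂ : ∀ w, (t₂, w) ∉ A := (hD.sinks t₂ ht₂V).2 ht₂b
    have hfe : E.filter (fun e => e.1 = t₁ ∨ e.2 = t₁) = E.filter (fun e => e.1 = t₁) := by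
      apply Finset.filter_congr
      intro e he
      constructor
      · rintro (h | h)
        · exact h
        · exfalso
          exact htarget e he t₁ ht₁ (by rw [h]; exact ⟨ht₁b, Relation.ReflTransGen.refl⟩)
      · exact Or.inl
    rw [hfe]
    by_contra hcard
    push_neg at hcard
    have hk : 2 ≤ (E.filter (fun e => e.1 = t₁)).card := hcard
    obtain ⟨y, hy⟩ := Infinite.exists_notMem_finset V
    have hyVbar : y ∉ Vbar := fun h => hy (hD.vbar_subset h)
    have hyt₁ : y ≠ t₁ := fun h => hy (h ▸ ht₁V)
    have hyt₂ : y ≠ t₂ := fun h => hy (h ▸ ht₂V)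
    set A' : Finset (α × α) :=
      A.image (fun a => if a.2 = t₂ then (a.1, y) else a) ∪ {(y, t₁), (y, t₂)} with hA'def
    set E' : Finset (α × α) :=
      (E.filter fun e => ¬ e.1 = t₁).image (fun e => if e.1 = t₂ then (y, e.2) else e)
      with hE'def
    set V' : Finset α := insert y V with hV'def
    have hA'1 : ∀ {p q : α}, (p, q) ∈ A → q ≠ t₂ → (p, q) ∈ A' := by
      intro p q h hq
      apply Finset.mem_union_left
      exact Finset.mem_image.2 ⟨(p, q), h, by simp [hq]⟩
    have hA'2 : ∀ {p : α}, (p, t₂) ∈ A → (p, y) ∈ A' := by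
      intro p h
      apply Finset.mem_union_left
      exact Finset.mem_image.2 ⟨(p, t₂), h, by simp⟩
    have hA'3 : (y, t₁) ∈ A' := by
      apply Finset.mem_union_right; simp
    have hA'4 : (y, t₂) ∈ A' := by
      apply Finset.mem_union_right; simp
    have hAV : ∀ {p q : α}, (p, q) ∈ A → p ∈ V ∧ q ∈ V := by
      intro p q h; exact Finset.mem_product.1 (hD.arcs_subset h)
    have hA'inv : ∀ {p q : α}, (p, q) ∈ A' →
        (p = y ∧ (q = t₁ ∨ q = t₂)) ∨ ((p, t₂) ∈ A ∧ q = y) ∨ ((p, q) ∈ A ∧ q ≠ t₂) := by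
      intro p q h
      rcases Finset.mem_union.1 h with h | h
      · obtain ⟨a, ha, heq⟩ := Finset.mem_image.1 h
        by_cases ha2 : a.2 = t₂
        · rw [if_pos ha2] at heq
          right; left
          have hp : a.1 = p := congrArg Prod.fst heq
          have hq : y = q := congrArg Prod.snd heq
          refine ⟨?_, hq.symm⟩
          have ha' : (a.1, a.2) ∈ A := by simpa using ha
          rw [← hp, ← ha2]; exact ha'
        · rw [if_neg ha2] at heq
          right; right
          subst heq
          exact ⟨ha, ha2⟩
      · simp only [Finset.mem_insert, Finset.mem_singleton] at h
        rcases h with h | h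
        · left; exact ⟨congrArg Prod.fst h, Or.inl (congrArg Prod.snd h)⟩
        · left; exact ⟨congrArg Prod.fst h, Or.inr (congrArg Prod.snd h)⟩
    have ht₁out' : ∀ w, (t₁, w) ∉ A' := by
      intro w h
      rcases hA'inv h with ⟨h1, -⟩ | ⟨h1, -⟩ | ⟨h1, -⟩
      · exact hyt₁ h1.symm
      · exact hsinkt₁ _ h1
      · exact hsinkt₁ _ h1
    have ht₂out' : ∀ w, (t₂, w) ∉ A' := by
      intro w h
      rcases hA'inv h with ⟨h1, -⟩ | ⟨h1, -⟩ | ⟨h1, -⟩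
      · exact hyt₂ h1.symm
      · exact hsinkt₂ _ h1
      · exact hsinkt₂ _ h1
    have P1 : ∀ {v u : α}, Relation.ReflTransGen (ArcRel A) v u → v ≠ t₂ →
        (u ≠ t₂ → Relation.ReflTransGen (ArcRel A') v u) ∧
        (u = t₂ → Relation.ReflTransGen (ArcRel A') v y) := by
      intro v u hr hv
      induction hr with
      | refl => exact ⟨fun _ => Relation.ReflTransGen.refl, fun h => absurd h hv⟩
      | @tail b c hab hbc ih =>
        have hbne : b ≠ t₂ := fun h => hsinkt₂ c (h ▸ hbc)
        refine ⟨fun hu => (ih.1 hbne).tail (hA'1 hbc hu), fun hu => (ih.1 hbne).tail ?_⟩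
        exact hA'2 (hu ▸ hbc)
    have hC1 : ∀ {v u : α}, v ≠ t₂ → u ∈ Cluster Vbar A v → u ∈ Cluster Vbar A' v := by
      rintro v u hv ⟨hub, hr⟩
      by_cases h : u = t₂
      · subst h
        exact ⟨hub, ((P1 hr hv).2 rfl).tail hA'4⟩
      · exact ⟨hub, (P1 hr hv).1 h⟩
    have hC1t : ∀ {v : α}, v ≠ t₂ → t₂ ∈ Cluster Vbar A v → t₁ ∈ Cluster Vbar A' v := by
      rintro v hv ⟨-, hr⟩
      exact ⟨ht₁b, ((P1 hr hv).2 rfl).tail hA'3⟩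
    have hCy1 : t₁ ∈ Cluster Vbar A' y := ⟨ht₁b, Relation.ReflTransGen.single hA'3⟩
    have hCy2 : t₂ ∈ Cluster Vbar A' y := ⟨ht₂b, Relation.ReflTransGen.single hA'4⟩
    have hCyub : ∀ {u : α}, u ∈ Cluster Vbar A' y → u = t₁ ∨ u = t₂ := by
      rintro u ⟨hub, hr⟩
      rcases hr.cases_head with h | ⟨c, hc, hcu⟩
      · exact absurd (by rw [h]; exact hub) hyVbar
      · rcases hA'inv hc with ⟨-, hct⟩ | ⟨h1, -⟩ | ⟨h1, -⟩
        · rcases hct with rfl | rfl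
          · exact Or.inl (reach_of_sink ht₁out' hcu)
          · exact Or.inr (reach_of_sink ht₂out' hcu)
        · exact absurd (hAV h1).1 hy
        · exact absurd (hAV h1).1 hy
    have hReachNoY : ∀ {v b : α}, Relation.ReflTransGen (ArcRel A) v b → v ≠ y → b ≠ y := by
      intro v b hr hv
      induction hr with
      | refl => exact hv
      | @tail b' c hab hbc ih =>
        intro h
        exact hy (by rw [← h]; exact (hAV hbc).2)
    have P2 : ∀ {v u : α}, Relation.ReflTransGen (ArcRel A') v u → v ≠ y →
        Relation.ReflTransGen (ArcRel A) v u ∨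
        (Relation.ReflTransGen (ArcRel A) v t₂ ∧ (u = t₁ ∨ u = t₂ ∨ u = y)) := by
      intro v u hr hv
      induction hr with
      | refl => exact Or.inl Relation.ReflTransGen.refl
      | @tail b c hab hbc ih =>
        rcases ih with hL | ⟨hRt, hRb⟩
        · rcases hA'inv hbc with ⟨hby, -⟩ | ⟨h1, hcy⟩ | ⟨h1, -⟩
          · exact absurd hby (hReachNoY hL hv)
          · exact Or.inr ⟨hL.tail h1, Or.inr (Or.inr hcy)⟩
          · exact Or.inl (hL.tail h1)
        · rcases hRb with rfl | rfl | rfl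
          · exact absurd hbc (ht₁out' c)
          · exact absurd hbc (ht₂out' c)
          · rcases hA'inv hbc with ⟨-, hct⟩ | ⟨h1, -⟩ | ⟨h1, -⟩
            · rcases hct with rfl | rfl
              · exact Or.inr ⟨hRt, Or.inl rfl⟩
              · exact Or.inr ⟨hRt, Or.inr (Or.inl rfl)⟩
            · exact absurd (hAV h1).1 hy
            · exact absurd (hAV h1).1 hy
    have hC2 : ∀ {v u : α}, v ≠ y → u ∈ Cluster Vbar A' v →
        u ∈ Cluster Vbar A v ∨ ((u = t₁ ∨ u = t₂) ∧ t₂ ∈ Cluster Vbar A v) := by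
      rintro v u hv ⟨hub, hr⟩
      rcases P2 hr hv with h | ⟨h2, hu⟩
      · exact Or.inl ⟨hub, h⟩
      · rcases hu with rfl | rfl | rfl
        · exact Or.inr ⟨Or.inl rfl, ht₂b, h2⟩
        · exact Or.inl ⟨hub, h2⟩
        · exact absurd hub hyVbar
    have P3 : ∀ {a b : α}, Relation.TransGen (ArcRel A') a b → a ≠ y → a ≠ t₁ → a ≠ t₂ →
        (b ≠ t₁ → Relation.TransGen (ArcRel A) a (if b = y then t₂ else b)) := by
      intro a b htr ha hat₁ hat₂
      induction htr with
      | @single c h =>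
        intro hb
        rcases hA'inv h with ⟨h1, -⟩ | ⟨h1, hcy⟩ | ⟨h1, hcnt⟩
        · exact absurd h1 ha
        · rw [if_pos hcy]
          exact Relation.TransGen.single h1
        · have hcney : c ≠ y := fun h2 => hy (by rw [← h2]; exact (hAV h1).2)
          rw [if_neg hcney]
          exact Relation.TransGen.single h1
      | @tail b' c hab hbc ih =>
        intro hb
        have hb'1 : b' ≠ t₁ := fun h => ht₁out' c (h ▸ hbc)
        rcases hA'inv hbc with ⟨hb'y, hct⟩ | ⟨h1, hcy⟩ | ⟨h1, hcnt⟩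
        · have h2 : Relation.TransGen (ArcRel A) a t₂ := by
            have h3 := ih hb'1
            rwa [if_pos hb'y] at h3
          rcases hct with rfl | rfl
          · exact absurd rfl hb
          · simpa using h2
        · have hb'ney : b' ≠ y := fun h2 => hy (by rw [← h2]; exact (hAV h1).1)
          have h2 := ih hb'1
          rw [if_neg hb'ney] at h2
          rw [if_pos hcy]
          exact h2.tail h1
        · have hb'ney : b' ≠ y := fun h2 => hy (by rw [← h2]; exact (hAV h1).1)
          have hcney : c ≠ y := fun h2 => hy (by rw [← h2]; exact (hAV h1).2)
          have h2 := ih hb'1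
          rw [if_neg hb'ney] at h2
          rw [if_neg hcney]
          exact h2.tail h1
    have hacyc' : ∀ v, ¬ Relation.TransGen (ArcRel A') v v := by
      intro v hv
      by_cases h1 : v = t₁
      · subst h1
        obtain ⟨c, hc, -⟩ := Relation.TransGen.head'_iff.1 hv
        exact ht₁out' c hc
      by_cases h2 : v = t₂
      · subst h2
        obtain ⟨c, hc, -⟩ := Relation.TransGen.head'_iff.1 hv
        exact ht₂out' c hc
      by_cases h3 : v = y
      · subst h3
        obtain ⟨c, hc, hcy⟩ := Relation.TransGen.head'_iff.1 hv
        rcases hA'inv hc with ⟨-, hct⟩ | ⟨hcA, -⟩ | ⟨hcA, -⟩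
        · rcases hct with rfl | rfl
          · exact hyt₁ (reach_of_sink ht₁out' hcy)
          · exact hyt₂ (reach_of_sink ht₂out' hcy)
        · exact hy (hAV hcA).1
        · exact hy (hAV hcA).1
      · have h4 := P3 hv h3 h1 h2 h1
        rw [if_neg h3] at h4
        exact hD.acyclic v h4
    have hsinks' : ∀ v ∈ V', ((∀ u, (v, u) ∉ A') ↔ v ∈ Vbar) := by
      intro v hv
      rcases Finset.mem_insert.1 hv with rfl | hvV
      · exact iff_of_false (fun hno => hno t₁ hA'3) hyVbar
      · constructor
        · intro h
          refine (hD.sinks v hvV).1 (fun u hu => ?_)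
          by_cases hu2 : u = t₂
          · exact h y (hA'2 (hu2 ▸ hu))
          · exact h u (hA'1 hu hu2)
        · intro hvb u hu
          rcases hA'inv hu with ⟨h1, -⟩ | ⟨h1, -⟩ | ⟨h1, -⟩
          · exact hy (h1 ▸ hvV)
          · exact (hD.sinks v hvV).2 hvb _ h1
          · exact (hD.sinks v hvV).2 hvb _ h1
    have harcs' : A' ⊆ V' ×ˢ V' := by
      intro a ha
      obtain ⟨p, q⟩ := a
      rcases hA'inv ha with ⟨rfl, hct⟩ | ⟨h1, rfl⟩ | ⟨h1, -⟩
      · rcases hct with rfl | rfl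
        · exact Finset.mem_product.2 ⟨Finset.mem_insert_self _ _, Finset.mem_insert_of_mem ht₁V⟩
        · exact Finset.mem_product.2 ⟨Finset.mem_insert_self _ _, Finset.mem_insert_of_mem ht₂V⟩
      · exact Finset.mem_product.2
          ⟨Finset.mem_insert_of_mem (hAV h1).1, Finset.mem_insert_self _ _⟩
      · exact Finset.mem_product.2
          ⟨Finset.mem_insert_of_mem (hAV h1).1, Finset.mem_insert_of_mem (hAV h1).2⟩
    have hedges' : E' ⊆ V' ×ˢ V' := by
      intro e he
      obtain ⟨e₀, he₀, rfl⟩ := Finset.mem_image.1 he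
      have he₀E : e₀ ∈ E := (Finset.mem_filter.1 he₀).1
      have hp := Finset.mem_product.1 (hD.edges_subset he₀E)
      by_cases h : e₀.1 = t₂
      · rw [if_pos h]
        exact Finset.mem_product.2 ⟨Finset.mem_insert_self _ _, Finset.mem_insert_of_mem hp.2⟩
      · rw [if_neg h]
        exact Finset.mem_product.2
          ⟨Finset.mem_insert_of_mem hp.1, Finset.mem_insert_of_mem hp.2⟩
    have hbnot : ∀ e ∈ E, e.2 ≠ t₂ :=
      fun e he h => htarget e he t₂ ht₂ (by rw [h]; exact ⟨ht₂b, Relation.ReflTransGen.refl⟩)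
    have he2y : ∀ e ∈ E, e.2 ≠ y := fun e he h =>
      hy (by rw [← h]; exact (Finset.mem_product.1 (hD.edges_subset he)).2)
    have he1y : ∀ e ∈ E, e.1 ≠ y := fun e he h =>
      hy (by rw [← h]; exact (Finset.mem_product.1 (hD.edges_subset he)).1)
    have hrep' : (↑Ebar : Set (α × α)) =
        ⋃ e ∈ E', Cluster Vbar A' e.1 ×ˢ Cluster Vbar A' e.2 := by
      ext x
      obtain ⟨a, b⟩ := x
      simp only [Set.mem_iUnion, Set.mem_prod, Finset.mem_coe]
      constructor
      · intro hab
        have hx : (a, b) ∈ ⋃ e ∈ E, Cluster Vbar A e.1 ×ˢ Cluster Vbar A e.2 := by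
          rw [← hD.represents]; exact hab
        simp only [Set.mem_iUnion, Set.mem_prod] at hx
        obtain ⟨e, he, ha, hb⟩ := hx
        by_cases hu1 : e.1 = t₁
        · have ha' : a = t₁ := by
            rw [hu1] at ha
            exact reach_of_sink hsinkt₁ ha.2
          rw [ha'] at hab ⊢
          have h2b : (t₂, b) ∈ Ebar := (htw.2 b).1 hab
          have hx2 : (t₂, b) ∈ ⋃ e ∈ E, Cluster Vbar A e.1 ×ˢ Cluster Vbar A e.2 := by
            rw [← hD.represents]; exact h2b
          simp only [Set.mem_iUnion, Set.mem_prod] at hx2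
          obtain ⟨e', he', ha2, hb2⟩ := hx2
          have he'1 : ¬ e'.1 = t₁ := by
            intro h
            rw [h] at ha2
            exact hne (reach_of_sink hsinkt₁ ha2.2).symm
          by_cases he'2 : e'.1 = t₂
          · refine ⟨(y, e'.2), ?_, hCy1, hC1 (hbnot e' he') hb2⟩
            exact Finset.mem_image.2 ⟨e', Finset.mem_filter.2 ⟨he', he'1⟩, by rw [if_pos he'2]⟩
          · refine ⟨e', ?_, hC1t he'2 ha2, hC1 (hbnot e' he') hb2⟩
            exact Finset.mem_image.2 ⟨e', Finset.mem_filter.2 ⟨he', he'1⟩, by rw [if_neg he'2]⟩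
        · by_cases hu2 : e.1 = t₂
          · have ha' : a = t₂ := by
              rw [hu2] at ha
              exact reach_of_sink hsinkt₂ ha.2
            refine ⟨(y, e.2), ?_, ?_, hC1 (hbnot e he) hb⟩
            · exact Finset.mem_image.2 ⟨e, Finset.mem_filter.2 ⟨he, hu1⟩, by rw [if_pos hu2]⟩
            · rw [ha']; exact hCy2
          · refine ⟨e, ?_, hC1 hu2 ha, hC1 (hbnot e he) hb⟩
            exact Finset.mem_image.2 ⟨e, Finset.mem_filter.2 ⟨he, hu1⟩, by rw [if_neg hu2]⟩
      · rintro ⟨e', he', ha, hb⟩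
        obtain ⟨e, hef, rfl⟩ := Finset.mem_image.1 he'
        have heE : e ∈ E := (Finset.mem_filter.1 hef).1
        have hb2 : b ∈ Cluster Vbar A' e.2 := by
          by_cases h : e.1 = t₂
          · rw [if_pos h] at hb; exact hb
          · rw [if_neg h] at hb; exact hb
        have hbC : b ∈ Cluster Vbar A e.2 := by
          rcases hC2 (he2y e heE) hb2 with h2 | ⟨-, h2⟩
          · exact h2
          · exact absurd h2 (htarget e heE t₂ ht₂)
        by_cases h : e.1 = t₂
        · rw [if_pos h] at ha
          have haY : a ∈ Cluster Vbar A' y := ha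
          have h2 : (t₂, b) ∈ Ebar :=
            hcov e heE t₂ b (by rw [h]; exact ⟨ht₂b, Relation.ReflTransGen.refl⟩) hbC
          rcases hCyub haY with rfl | rfl
          · exact (htw.2 b).2 h2
          · exact h2
        · rw [if_neg h] at ha
          rcases hC2 (he1y e heE) ha with h2 | ⟨hat, h2⟩
          · exact hcov e heE a b h2 hbC
          · have h3 : (t₂, b) ∈ Ebar := hcov e heE t₂ b h2 hbC
            rcases hat with rfl | rfl
            · exact (htw.2 b).2 h3
            · exact h3
    have hD' : IsDagCompression Vbar Ebar V' A' E' :=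
      ⟨hD.vbar_subset.trans (Finset.subset_insert _ _), harcs', hacyc', hsinks', hedges', hrep'⟩
    have hA'card : A'.card ≤ A.card + 2 := by
      refine (Finset.card_union_le _ _).trans ?_
      have h1 : (A.image fun a => if a.2 = t₂ then (a.1, y) else a).card ≤ A.card :=
        Finset.card_image_le
      have h2 : ({(y, t₁), (y, t₂)} : Finset (α × α)).card ≤ 2 := by
        refine (Finset.card_insert_le _ _).trans ?_
        simp
      omega
    have hkE : (E.filter (fun e => e.1 = t₁)).card ≤ E.card := Finset.card_filter_le _ _
    have hfneg : (E.filter fun e => ¬ e.1 = t₁).card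
        = E.card - (E.filter (fun e => e.1 = t₁)).card := by
      have h1 := Finset.card_filter_add_card_filter_not (s := E)
        (p := fun e => e.1 = t₁)
      omega
    have hE'card : E'.card ≤ E.card - (E.filter (fun e => e.1 = t₁)).card := by
      rw [← hfneg]; exact Finset.card_image_le
    have hsize' : A'.card + E'.card ≤ sInf S := by
      rw [← hsz]; omega
    have hmem : A'.card + E'.card ∈ S := ⟨V', A', E', hD', rfl⟩
    have hge := Nat.sInf_le hmem
    have heq : A'.card + E'.card = sInf S := le_antisymm hsize' hge
    have hmem2 : E'.card ∈ S₂ := ⟨V', A', E', hD', heq, rfl⟩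
    have h2 := Nat.sInf_le hmem2
    omega
  intro t₁ ht₁ t₂ ht₂ hne htw
  exact ⟨key t₁ ht₁ t₂ ht₂ hne htw,
    key t₂ ht₂ t₁ ht₁ hne.symm ⟨fun v => (htw.1 v).symm, fun v => (htw.2 v).symm⟩⟩
end
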